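/- arXiv:math/0509456 — 8 statements merged into one kernel-verified Lean document; each statement's English description precedes it below -/
import Mathlib

section
/- Let R be an integral domain, T a flat overring of R (with the same quotient field) such that the conductor M := (R : T) is a nonzero maximal ideal of T, and suppose T/M is a field extension of R/M with R/M ≠ T/M. Then T is a t_R-ideal of R, i.e., T = T^{t_R} where t_R is the t-operation of R viewed on the fractional R-module T. -/
/-!
For `t ∈ T`, the equational criterion for flatness applied to the relation `s t = a`
(with `t = a / s`) shows that the ideal `(R : t)` of `R` extends to the unit ideal of `T`. Hence for `F = (f₁, …, fₙ) ⊆ T` the ideal `J = (R : F) ⊇ ∏ (R : fᵢ)` also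
satisfies `J T = T`. If `x ∈ F^{v}`, then `x J ⊆ R` because `J ⊆ F⁻¹`, so
`x ∈ x J T ⊆ R T = T`.
-/

open FractionalIdeal

namespace Subalgebra

variable {R A : Type*} [CommRing R] [CommRing A] [Algebra R A] (T : Subalgebra R A)

theorem smul_toSubmodule_eq_self_of_one_mem {I : Ideal R}
    (h : (1 : A) ∈ I • toSubmodule T) : I • toSubmodule T = toSubmodule T := by
  refine le_antisymm Submodule.smul_le_right fun y hy => ?_
  have key : ∀ m ∈ I • toSubmodule T, y * m ∈ I • toSubmodule T := fun m hm =>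
    Submodule.smul_induction_on hm
      (fun r hr z hz => by
        rw [mul_smul_comm]; exact Submodule.smul_mem_smul hr (T.mul_mem hy hz))
      (fun m m' hm hm' => by rw [mul_add]; exact add_mem hm hm')
  simpa using key 1 h

theorem mem_of_smul_toSubmodule_eq_self {I : Ideal R} (hI : I • toSubmodule T = toSubmodule T)
    {x : A} (hx : ∀ r ∈ I, x * algebraMap R A r ∈ (1 : Submodule R A)) : x ∈ T := by
  have key : ∀ m ∈ I • toSubmodule T, x * m ∈ T := fun m hm =>
    Submodule.smul_induction_on hm
      (fun r hr y hy => by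
        obtain ⟨r', hr'⟩ := Submodule.mem_one.mp (hx r hr)
        rw [Algebra.smul_def, ← mul_assoc, ← hr']
        exact T.mul_mem (T.algebraMap_mem r') hy)
      (fun m m' hm hm' => by rw [mul_add]; exact T.add_mem hm hm')
  simpa using key 1 (hI.ge T.one_mem)

variable [Module.Flat R T]

theorem colon_singleton_smul_eq_self_of_flat (S : Submonoid R) [IsLocalization S A] {t : A}
    (ht : t ∈ T) :
    (1 : Submodule R A).colon {t} • toSubmodule T = toSubmodule T := by
  apply smul_toSubmodule_eq_self_of_one_mem
  obtain ⟨⟨a, s⟩, hts⟩ := IsLocalization.surj S t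
  have hrel : ∑ i, ![(s : R), -a] i • ![(⟨t, ht⟩ : T), 1] i = 0 := by
    ext
    simp [Fin.sum_univ_two, Algebra.smul_def, hts, mul_comm]
  obtain ⟨k, c, y, hy, hc⟩ := Module.Flat.isTrivialRelation_of_sum_smul_eq_zero hrel
  have hone : (1 : A) = ∑ j, c 1 j • (y j : A) := by
    simpa using congrArg Subtype.val (hy 1)
  rw [hone]
  refine Submodule.sum_mem _ fun j _ => Submodule.smul_mem_smul ?_ (y j).2
  rw [Submodule.mem_colon_singleton, Submodule.mem_one]
  refine ⟨c 0 j, (IsLocalization.map_units A s).mul_left_cancel ?_⟩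
  have hcj : (s : R) * c 0 j = a * c 1 j := by
    simpa [Fin.sum_univ_two, neg_mul, add_neg_eq_zero] using hc j
  rw [Algebra.smul_def, ← map_mul, hcj, map_mul, ← hts]
  ring

theorem colon_smul_eq_self_of_flat (S : Submonoid R) [IsLocalization S A] {F : Submodule R A}
    (hF : F.FG) (hFT : F ≤ toSubmodule T) :
    (1 : Submodule R A).colon F • toSubmodule T = toSubmodule T := by
  classical
  obtain ⟨s, rfl⟩ := hF
  rw [Submodule.colon_span]
  induction s using Finset.induction_on with
  | empty => simp
  | insert a s _ ih =>
    have hs := Submodule.span_le.mp hFT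
    rw [Finset.coe_insert, Set.insert_eq, Submodule.colon_union]
    refine le_antisymm Submodule.smul_le_right ?_
    calc toSubmodule T
        = ((1 : Submodule R A).colon {a} * (1 : Submodule R A).colon s) • toSubmodule T := by
          rw [Submodule.mul_smul, ih, colon_singleton_smul_eq_self_of_flat T S]
          · exact hs (by simp)
          · exact Submodule.span_le.mpr fun _ hx => hs (by simp [hx])
      _ ≤ _ := Submodule.smul_mono_left Ideal.mul_le_inf

theorem one_div_one_div_le_of_flat (S : Submonoid R) [IsLocalization S A] {F : Submodule R A}
    (hF : F.FG) (hFT : F ≤ toSubmodule T) :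
    1 / (1 / F) ≤ toSubmodule T := fun _ hx =>
  T.mem_of_smul_toSubmodule_eq_self (colon_smul_eq_self_of_flat T S hF hFT) fun r hr =>
    Submodule.mem_div_iff_forall_mul_mem.mp hx _ <|
      Submodule.mem_div_iff_forall_mul_mem.mpr fun y hy =>
        Algebra.smul_def r y ▸ Submodule.mem_colon.mp hr y hy

end Subalgebra

theorem overring_is_t_ideal_general
    {R K : Type*} [CommRing R] [IsDomain R] [Field K] [Algebra R K] [IsFractionRing R K]
    (T : Subalgebra R K) [Module.Flat R ↥T]
    (TF : FractionalIdeal (nonZeroDivisors R) K)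
    (hTF : (TF : Submodule R K) = Subalgebra.toSubmodule T) :
    ∀ F : FractionalIdeal (nonZeroDivisors R) K, F ≠ 0 → (F : Submodule R K).FG →
      F ≤ TF → 1 / (1 / F) ≤ TF := by
  intro F hF0 hFG hFT
  by_cases hF' : 1 / F = 0
  · simp [hF']
  rw [← coe_le_coe, coe_div hF', coe_div hF0, coe_one, hTF]
  rw [← coe_le_coe, hTF] at hFT
  exact T.one_div_one_div_le_of_flat (nonZeroDivisors R) hFG hFT

/-- Let `T` be a flat overring of `R` (inside the quotient field `K` of `R`) whose
conductor `M = (R : T)` is a nonzero maximal ideal of `T`, and such that the residue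
extension `R/M → T/M` is proper (some `t ∈ T` is not congruent mod the conductor to any
element of `R`). Then `T` is a `t_R`-ideal of `R`: for every nonzero finitely generated
fractional ideal `F ⊆ T` of `R`, `F^{v_R} = 1/(1/F) ⊆ T`. -/
theorem overring_is_t_ideal
    {R K : Type*} [CommRing R] [IsDomain R] [Field K] [Algebra R K] [IsFractionRing R K]
    (T : Subalgebra R K) [Module.Flat R ↥T]
    (hmax : ∃ Mi : Ideal ↥T, Mi.IsMaximal ∧ Mi ≠ ⊥ ∧
      (∀ t : ↥T, t ∈ Mi ↔ ∀ u : ↥T, ∃ r : R, algebraMap R K r = (t : K) * (u : K)))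
    (hres : ∃ t : ↥T, ∀ r : R,
      ¬ (∀ u : ↥T, ∃ r' : R, algebraMap R K r' = ((t : K) - algebraMap R K r) * (u : K)))
    (TF : FractionalIdeal (nonZeroDivisors R) K)
    (hTF : (TF : Submodule R K) = Subalgebra.toSubmodule T) :
    ∀ F : FractionalIdeal (nonZeroDivisors R) K, F ≠ 0 → (F : Submodule R K).FG →
      F ≤ TF → 1 / (1 / F) ≤ TF :=
  overring_is_t_ideal_general T TF hTF
end

section
/- Let ι : R ↪ T be an embedding of integral domains with the same quotient field K and let ⋆ be a semistar operation on T. Then the finite-type operation associated to ⋆^ι equals (⋆_f)^ι, i.e., for every nonzero R-submodule E of K, ∪{(FT)^⋆ | F ⊆ E finitely generated R-submodule} = (ET)^{⋆_f}. -/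
open Pointwise

/-- A semistar operation on a domain `A` with (quotient) field `K`, acting on the
nonzero `A`-submodules of `K` (the value on `⊥` is irrelevant). -/
structure SemistarOp (A K : Type*) [CommRing A] [Field K] [Algebra A K] where
  toFun : Submodule A K → Submodule A K
  star_smul : ∀ (x : K) (E : Submodule A K), x ≠ 0 → E ≠ ⊥ → toFun (x • E) = x • toFun E
  mono : ∀ E F : Submodule A K, E ≠ ⊥ → F ≠ ⊥ → E ≤ F → toFun E ≤ toFun F
  le_star : ∀ E : Submodule A K, E ≠ ⊥ → E ≤ toFun E
  star_idem : ∀ E : Submodule A K, E ≠ ⊥ → toFun (toFun E) = toFun E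

/-- A semistar operation is of finite type if `E^⋆` is the union of `F^⋆` over the
nonzero finitely generated submodules `F ⊆ E`. -/
def SemistarOp.FiniteType {A K : Type*} [CommRing A] [Field K] [Algebra A K]
    (s : SemistarOp A K) : Prop :=
  ∀ E : Submodule A K, E ≠ ⊥ →
    s.toFun E = ⨆ F : {F : Submodule A K // F ≠ ⊥ ∧ F.FG ∧ F ≤ E}, s.toFun F.1

section Aux

variable {R K : Type*} [CommRing R] [Field K] [Algebra R K] (T : Subalgebra R K)

lemma spanT_ne_bot {F : Submodule R K} (hF : F ≠ ⊥) :
    Submodule.span ↥T (F : Set K) ≠ ⊥ := by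
  obtain ⟨x, hxF, hx⟩ := (Submodule.ne_bot_iff _).mp hF
  exact (Submodule.ne_bot_iff _).mpr ⟨x, Submodule.subset_span hxF, hx⟩

lemma spanT_fg {F : Submodule R K} (hF : F.FG) :
    (Submodule.span ↥T (F : Set K)).FG := by
  obtain ⟨s, rfl⟩ := hF
  rw [Submodule.span_span_of_tower]
  exact ⟨s, rfl⟩

end Aux

/-- For a semistar operation `⋆` on an overring `T` of `R` (with common quotient field
`K`), the finite-type operation associated to `⋆^ι` equals `(⋆_f)^ι`: for every nonzero
`R`-submodule `E` of `K`,
`⋃ {(FT)^⋆ | F ⊆ E finitely generated} = (ET)^{⋆_f}`. -/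
theorem semistar_finite_type_extend
    {R K : Type*} [CommRing R] [Field K] [Algebra R K]
    (T : Subalgebra R K) (sT : SemistarOp ↥T K)
    (E : Submodule R K) (hE : E ≠ ⊥) :
    (⨆ F : {F : Submodule R K // F ≠ ⊥ ∧ F.FG ∧ F ≤ E},
        (sT.toFun (Submodule.span ↥T (F.1 : Set K))).restrictScalars R) =
    (⨆ G : {G : Submodule ↥T K // G ≠ ⊥ ∧ G.FG ∧ G ≤ Submodule.span ↥T (E : Set K)},
        sT.toFun G.1).restrictScalars R := by
  obtain ⟨y, hyE, hy⟩ := (Submodule.ne_bot_iff _).mp hE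
  -- a canonical nonzero index on the `F` side
  have hF0 : (Submodule.span R {y} : Submodule R K) ≠ ⊥ ∧
      (Submodule.span R {y}).FG ∧ Submodule.span R {y} ≤ E := by
    refine ⟨?_, Submodule.fg_span_singleton y, by
      rw [Submodule.span_le, Set.singleton_subset_iff]; exact hyE⟩
    simpa [Submodule.span_singleton_eq_bot] using hy
  haveI : Nonempty {F : Submodule R K // F ≠ ⊥ ∧ F.FG ∧ F ≤ E} := ⟨⟨_, hF0⟩⟩
  -- span T E is the (directed) sup of the span T F
  have hdirF : Directed (· ≤ ·)
      (fun F : {F : Submodule R K // F ≠ ⊥ ∧ F.FG ∧ F ≤ E} =>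
        Submodule.span ↥T (F.1 : Set K)) := by
    rintro ⟨F₁, h₁⟩ ⟨F₂, h₂⟩
    exact ⟨⟨F₁ ⊔ F₂, fun h => h₁.1 (le_bot_iff.mp (h ▸ le_sup_left)),
        h₁.2.1.sup h₂.2.1, sup_le h₁.2.2 h₂.2.2⟩,
      Submodule.span_mono (fun z hz => Submodule.mem_sup_left hz),
      Submodule.span_mono (fun z hz => Submodule.mem_sup_right hz)⟩
  have hspanE : Submodule.span ↥T (E : Set K) =
      ⨆ F : {F : Submodule R K // F ≠ ⊥ ∧ F.FG ∧ F ≤ E},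
        Submodule.span ↥T (F.1 : Set K) := by
    apply le_antisymm
    · rw [Submodule.span_le]
      intro x hx
      by_cases hx0 : x = 0
      · simp [hx0]
      · have hFx : (Submodule.span R {x} : Submodule R K) ≠ ⊥ ∧
            (Submodule.span R {x}).FG ∧ Submodule.span R {x} ≤ E := by
          refine ⟨by simpa [Submodule.span_singleton_eq_bot] using hx0,
            Submodule.fg_span_singleton x, by
              rw [Submodule.span_le, Set.singleton_subset_iff]; exact hx⟩
        exact le_iSup (fun F : {F : Submodule R K // F ≠ ⊥ ∧ F.FG ∧ F ≤ E} =>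
            Submodule.span ↥T (F.1 : Set K)) ⟨_, hFx⟩
          (Submodule.subset_span (Submodule.mem_span_singleton_self x))
    · exact iSup_le fun F => Submodule.span_mono F.2.2.2
  apply le_antisymm
  · refine iSup_le fun F => ?_
    intro x hx
    simp only [Submodule.restrictScalars_mem] at hx ⊢
    exact le_iSup (fun G : {G : Submodule ↥T K // G ≠ ⊥ ∧ G.FG ∧
          G ≤ Submodule.span ↥T (E : Set K)} => sT.toFun G.1)
      ⟨Submodule.span ↥T (F.1 : Set K), spanT_ne_bot T F.2.1, spanT_fg T F.2.2.1,
        le_trans (le_iSup (fun F : {F : Submodule R K // F ≠ ⊥ ∧ F.FG ∧ F ≤ E} => Submodule.span ↥T (F.1 : Set K)) F) hspanE.ge⟩ hx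
  · intro x hx
    simp only [Submodule.restrictScalars_mem] at hx
    haveI : Nonempty {G : Submodule ↥T K // G ≠ ⊥ ∧ G.FG ∧
        G ≤ Submodule.span ↥T (E : Set K)} :=
      ⟨⟨Submodule.span ↥T ((Submodule.span R {y} : Submodule R K) : Set K),
        spanT_ne_bot T hF0.1, spanT_fg T hF0.2.1, Submodule.span_mono hF0.2.2⟩⟩
    have hdirG : Directed (· ≤ ·)
        (fun G : {G : Submodule ↥T K // G ≠ ⊥ ∧ G.FG ∧
            G ≤ Submodule.span ↥T (E : Set K)} => sT.toFun G.1) := by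
      rintro ⟨G₁, h₁⟩ ⟨G₂, h₂⟩
      have hb : G₁ ⊔ G₂ ≠ ⊥ := fun h => h₁.1 (le_bot_iff.mp (h ▸ le_sup_left))
      exact ⟨⟨G₁ ⊔ G₂, hb, h₁.2.1.sup h₂.2.1, sup_le h₁.2.2 h₂.2.2⟩,
        sT.mono _ _ h₁.1 hb le_sup_left, sT.mono _ _ h₂.1 hb le_sup_right⟩
    obtain ⟨G, hxG⟩ := (Submodule.mem_iSup_of_directed _ hdirG).mp hx
    -- G.1 is f.g., hence compact, and G.1 ≤ span T E = directed sup of span T F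
    have hcomp := (Submodule.fg_iff_compact G.1).mp G.2.2.1
    rw [CompleteLattice.isCompactElement_iff_le_of_directed_sSup_le] at hcomp
    obtain ⟨-, ⟨F, rfl⟩, hGF⟩ := hcomp
      (Set.range (fun F : {F : Submodule R K // F ≠ ⊥ ∧ F.FG ∧ F ≤ E} =>
        Submodule.span ↥T (F.1 : Set K)))
      (Set.range_nonempty _) hdirF.directedOn_range
      (by rw [sSup_range, ← hspanE]; exact G.2.2.2)
    have : sT.toFun G.1 ≤ sT.toFun (Submodule.span ↥T (F.1 : Set K)) :=
      sT.mono _ _ G.2.1 (spanT_ne_bot T F.2.1) hGF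
    exact le_iSup (fun F : {F : Submodule R K // F ≠ ⊥ ∧ F.FG ∧ F ≤ E} =>
        (sT.toFun (Submodule.span ↥T (F.1 : Set K))).restrictScalars R) F (this hxG)
end

section
/- In a pullback diagram of type (□⁺) (T integral domain, M nonzero maximal ideal of T, D a proper subring of k = T/M with quotient field k, R = φ⁻¹(D)): for every prime ideal P of R not containing M, R_P = T_{PT}; and if P ⊇ M, then TR_P = T_M, i.e., the subring of the quotient field generated by T and R_P equals T localized at M. -/
/-- In a pullback of type (□⁺) (with `K` the common quotient field of `R` and `T`):
for a prime ideal `P` of `R = φ⁻¹(D)` not containing `M`, `R_P = T_{PT}` (as subsets of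
`K`), and for `P ⊇ M`, the ring `T·R_P` generated by `T` and `R_P` equals `T_M`. -/
theorem localization_at_primes_of_pullback
    {T K : Type*} [CommRing T] [IsDomain T] [Field K] [Algebra T K] [IsFractionRing T K]
    (M : Ideal T) [M.IsMaximal] (hM : M ≠ ⊥)
    (D : Subring (T ⧸ M)) (hD : D ≠ ⊤)
    (hQF : ∀ x : T ⧸ M, ∃ a b : ↥D, (b : T ⧸ M) ≠ 0 ∧ x * (b : T ⧸ M) = (a : T ⧸ M))
    (R : Subring T) (hR : R = D.comap (Ideal.Quotient.mk M))
    (P : Ideal ↥R) (hP : P.IsPrime) :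
    (¬ M.comap R.subtype ≤ P →
      {x : K | ∃ a s : ↥R, s ∉ P ∧ x * algebraMap T K (s : T) = algebraMap T K (a : T)} =
      {x : K | ∃ a s' : T, s' ∉ P.map R.subtype ∧ x * algebraMap T K s' = algebraMap T K a}) ∧
    (M.comap R.subtype ≤ P →
      (Subring.closure (Set.range (algebraMap T K) ∪
        {x : K | ∃ a s : ↥R, s ∉ P ∧ x * algebraMap T K (s : T) = algebraMap T K (a : T)})
          : Set K) =
      {x : K | ∃ a s' : T, s' ∉ M ∧ x * algebraMap T K s' = algebraMap T K a}) := by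
  have hMR : ∀ t : T, t ∈ M → t ∈ R := by
    intro t ht
    rw [hR]
    show Ideal.Quotient.mk M t ∈ D
    rw [Ideal.Quotient.eq_zero_iff_mem.mpr ht]
    exact zero_mem D
  have hMmax : M.IsMaximal := inferInstance
  constructor
  · -- Part 1 : M ⊄ P
    intro hMP
    obtain ⟨m, hmM, hmP⟩ := SetLike.not_le_iff_exists.mp hMP
    have hmM' : (m : T) ∈ M := hmM
    -- key lemma : multiplying an element of PT by m lands in P (inside R)
    have key : ∀ t ∈ Ideal.map R.subtype P, ∀ c : T,
        ∃ r : ↥R, r ∈ P ∧ (r : T) = (m : T) * (c * t) := by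
      intro t ht
      refine Submodule.span_induction ?_ ?_ ?_ ?_ ht
      · rintro x ⟨y, hyP, rfl⟩ c
        have hmem : (m : T) * c ∈ R := hMR _ (M.mul_mem_right c hmM')
        exact ⟨(⟨(m : T) * c, hmem⟩ : ↥R) * y, P.mul_mem_left _ hyP, by
          show (↑m * c * ↑y : T) = ↑m * (c * ↑y); ring⟩
      · intro c
        exact ⟨0, P.zero_mem, by push_cast; ring⟩
      · rintro x y hx hy ihx ihy c
        obtain ⟨rx, hrx, hrx'⟩ := ihx c
        obtain ⟨ry, hry, hry'⟩ := ihy c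
        exact ⟨rx + ry, P.add_mem hrx hry, by push_cast [hrx', hry']; ring⟩
      · rintro c' x hx ih c
        obtain ⟨r, hr, hr'⟩ := ih (c * c')
        exact ⟨r, hr, by rw [hr', smul_eq_mul]; ring⟩
    ext x
    constructor
    · rintro ⟨a, s, hsP, hxs⟩
      refine ⟨(a : T), (s : T), ?_, hxs⟩
      intro hsPT
      obtain ⟨r, hrP, hre⟩ := key _ hsPT 1
      have : r = m * s := by
        ext
        rw [hre]; push_cast; ring
      rw [this] at hrP
      rcases hP.mem_or_mem hrP with h | h
      · exact hmP h
      · exact hsP h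
    · rintro ⟨a, s', hs'PT, hxs⟩
      by_cases hex : ∃ u : ↥R, ∃ h : (u : T) * s' ∈ R, (⟨(u : T) * s', h⟩ : ↥R) ∉ P
      · obtain ⟨u, husR, husP⟩ := hex
        have haR : (m : T) * ((u : T) * a) ∈ R := hMR _ (M.mul_mem_right _ hmM')
        have hsR : (m : T) * ((u : T) * s') ∈ R := hMR _ (M.mul_mem_right _ hmM')
        refine ⟨⟨(m : T) * ((u : T) * a), haR⟩, ⟨(m : T) * ((u : T) * s'), hsR⟩, ?_, ?_⟩
        · intro hmem
          have h2 : m * (⟨(u : T) * s', husR⟩ : ↥R) ∈ P := by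
            have : (⟨(m : T) * ((u : T) * s'), hsR⟩ : ↥R)
                = m * (⟨(u : T) * s', husR⟩ : ↥R) := by ext; push_cast; ring
            rwa [this] at hmem
          rcases hP.mem_or_mem h2 with h | h
          · exact hmP h
          · exact husP h
        · show x * algebraMap T K ((m : T) * ((u : T) * s'))
            = algebraMap T K ((m : T) * ((u : T) * a))
          rw [map_mul, map_mul, map_mul, map_mul]
          calc x * (algebraMap T K (m : T) * (algebraMap T K (u : T) * algebraMap T K s'))
              = algebraMap T K (m : T) * algebraMap T K (u : T)
                  * (x * algebraMap T K s') := by ring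
            _ = algebraMap T K (m : T) * (algebraMap T K (u : T) * algebraMap T K a) := by
                rw [hxs]; ring
      · push_neg at hex
        exfalso
        apply hs'PT
        -- construct r ∈ R \ M with r * s' ∈ R
        obtain ⟨a₀, b₀, hb₀, heq₀⟩ := hQF (Ideal.Quotient.mk M s')
        obtain ⟨r, hr⟩ := Ideal.Quotient.mk_surjective (b₀ : T ⧸ M)
        have hrR : r ∈ R := by
          rw [hR]; show Ideal.Quotient.mk M r ∈ D; rw [hr]; exact b₀.2
        have hrM : r ∉ M := by
          intro h
          exact hb₀ (by rw [← hr, Ideal.Quotient.eq_zero_iff_mem.mpr h])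
        have hrs'R : r * s' ∈ R := by
          rw [hR]
          show Ideal.Quotient.mk M (r * s') ∈ D
          rw [map_mul, hr, mul_comm, heq₀]
          exact a₀.2
        have h1 : r * s' ∈ Ideal.map R.subtype P := by
          have := hex ⟨r, hrR⟩ hrs'R
          exact Ideal.mem_map_of_mem R.subtype this
        have h2 : ∀ i ∈ M, i * s' ∈ Ideal.map R.subtype P := by
          intro i hi
          have his' : i * s' ∈ R := hMR _ (M.mul_mem_right s' hi)
          have := hex ⟨i, hMR i hi⟩ his'
          exact Ideal.mem_map_of_mem R.subtype this
        obtain ⟨y, i, hiM, hyi⟩ := hMmax.exists_inv hrM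
        have hs'eq : s' = y * (r * s') + i * s' := by
          calc s' = (y * r + i) * s' := by rw [hyi, one_mul]
            _ = y * (r * s') + i * s' := by ring
        rw [hs'eq]
        exact Ideal.add_mem _ (Ideal.mul_mem_left _ y h1) (h2 i hiM)
  · -- Part 2 : M ⊆ P
    intro hMP
    have h1M : (1 : T) ∉ M := fun h => hMmax.ne_top (M.eq_top_iff_one.mpr h)
    have halg : Function.Injective (algebraMap T K) := IsFractionRing.injective T K
    -- the target set is a subring
    set S : Subring K :=
      { carrier := {x : K | ∃ a s' : T, s' ∉ M ∧ x * algebraMap T K s' = algebraMap T K a}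
        one_mem' := ⟨1, 1, h1M, by rw [one_mul]⟩
        zero_mem' := ⟨0, 1, h1M, by rw [zero_mul, map_zero]⟩
        mul_mem' := by
          rintro x y ⟨a, s, hs, hx⟩ ⟨b, u, hu, hy⟩
          refine ⟨a * b, s * u, fun h => ?_, ?_⟩
          · rcases hMmax.isPrime.mem_or_mem h with h | h
            exacts [hs h, hu h]
          · rw [map_mul, map_mul, show x * y * (algebraMap T K s * algebraMap T K u)
              = (x * algebraMap T K s) * (y * algebraMap T K u) by ring, hx, hy]
        add_mem' := by
          rintro x y ⟨a, s, hs, hx⟩ ⟨b, u, hu, hy⟩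
          refine ⟨a * u + b * s, s * u, fun h => ?_, ?_⟩
          · rcases hMmax.isPrime.mem_or_mem h with h | h
            exacts [hs h, hu h]
          · rw [map_mul, map_add, map_mul, map_mul]
            linear_combination algebraMap T K u * hx + algebraMap T K s * hy
        neg_mem' := by
          rintro x ⟨a, s, hs, hx⟩
          exact ⟨-a, s, hs, by rw [map_neg, neg_mul, hx]⟩ } with hS
    apply Set.Subset.antisymm
    · -- closure ⊆ T_M
      have hle : Subring.closure (Set.range (algebraMap T K) ∪
          {x : K | ∃ a s : ↥R, s ∉ P ∧ x * algebraMap T K (s : T) = algebraMap T K (a : T)})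
          ≤ S := by
        apply Subring.closure_le.mpr
        rintro x (⟨t, rfl⟩ | ⟨a, s, hsP, hxs⟩)
        · exact ⟨t, 1, h1M, by rw [map_one, mul_one]⟩
        · refine ⟨(a : T), (s : T), fun h => hsP (hMP ?_), hxs⟩
          exact h
      exact hle
    · -- T_M ⊆ closure
      rintro x ⟨a, s', hs', hxs⟩
      -- find t with t * s' = 1 - i, i ∈ M
      obtain ⟨t, i, hiM, hti⟩ := hMmax.exists_inv hs'
      set w : T := t * s' with hw
      have hwi : w + i = 1 := hti
      have hwR : w ∈ R := by
        rw [hR]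
        show Ideal.Quotient.mk M w ∈ D
        have : Ideal.Quotient.mk M w = 1 := by
          have := congrArg (Ideal.Quotient.mk M) hwi
          rwa [map_add, Ideal.Quotient.eq_zero_iff_mem.mpr hiM, add_zero, map_one] at this
        rw [this]; exact one_mem D
      have hwP : (⟨w, hwR⟩ : ↥R) ∉ P := by
        intro hmem
        have hiP : (⟨i, hMR i hiM⟩ : ↥R) ∈ P := hMP hiM
        have h1 : (⟨w, hwR⟩ : ↥R) + ⟨i, hMR i hiM⟩ ∈ P := P.add_mem hmem hiP
        have : ((⟨w, hwR⟩ : ↥R) + ⟨i, hMR i hiM⟩ : ↥R) = 1 := by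
          ext; push_cast; exact hwi
        rw [this] at h1
        exact hP.ne_top (P.eq_top_iff_one.mpr h1)
      have hwM : w ∉ M := by
        intro h
        have : (1 : T) ∈ M := by rw [← hwi]; exact M.add_mem h hiM
        exact h1M this
      have hw0 : algebraMap T K w ≠ 0 := by
        intro h
        apply hwM
        have : w = 0 := halg (by rw [h, map_zero])
        rw [this]; exact M.zero_mem
      -- x = algebraMap (a*t) * (algebraMap w)⁻¹
      have hxw : x * algebraMap T K w = algebraMap T K (a * t) := by
        rw [hw, map_mul, map_mul, show x * (algebraMap T K t * algebraMap T K s')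
          = algebraMap T K t * (x * algebraMap T K s') by ring, hxs, mul_comm]
      have hy : (algebraMap T K w)⁻¹ ∈
          {x : K | ∃ a s : ↥R, s ∉ P ∧ x * algebraMap T K (s : T) = algebraMap T K (a : T)} := by
        refine ⟨1, ⟨w, hwR⟩, hwP, ?_⟩
        show (algebraMap T K w)⁻¹ * algebraMap T K w = algebraMap T K ((1 : ↥R) : T)
        rw [inv_mul_cancel₀ hw0]
        norm_num
      have hxval : x = algebraMap T K (a * t) * (algebraMap T K w)⁻¹ := by
        rw [eq_mul_inv_iff_mul_eq₀ hw0, hxw]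
      rw [hxval]
      exact Subring.mul_mem _
        (Subring.subset_closure (Or.inl ⟨a * t, rfl⟩))
        (Subring.subset_closure (Or.inr hy))
end

section
/- In a pullback diagram of type (□⁺), let Q' be a prime ideal of T and P a prime ideal of R with M ⊆ P. If Q' ∩ R ⊆ P, then Q' ⊆ M. -/
/-- In a pullback of type (□⁺): if `Q'` is a prime ideal of `T`, `P` a prime ideal of
`R = φ⁻¹(D)` containing `M`, and `Q' ∩ R ⊆ P`, then `Q' ⊆ M`. -/
theorem prime_le_M_of_trace_le
    {T : Type*} [CommRing T] [IsDomain T] (M : Ideal T) [M.IsMaximal] (hM : M ≠ ⊥)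
    (D : Subring (T ⧸ M)) (hD : D ≠ ⊤)
    (hQF : ∀ x : T ⧸ M, ∃ a b : ↥D, (b : T ⧸ M) ≠ 0 ∧ x * (b : T ⧸ M) = (a : T ⧸ M))
    (R : Subring T) (hR : R = D.comap (Ideal.Quotient.mk M))
    (Q' : Ideal T) (hQ' : Q'.IsPrime) (P : Ideal ↥R) (hP : P.IsPrime)
    (hMP : M.comap R.subtype ≤ P) (hQP : Q'.comap R.subtype ≤ P) :
    Q' ≤ M := by
  intro q hq
  by_contra hqM
  obtain ⟨x, m, hm, hxm⟩ := (inferInstance : M.IsMaximal).exists_inv hqM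
  -- y = x * q
  have hyQ : x * q ∈ Q' := Q'.mul_mem_left x hq
  have hyR : x * q ∈ R := by
    rw [hR]
    show Ideal.Quotient.mk M (x * q) ∈ D
    have : Ideal.Quotient.mk M (x * q) = 1 := by
      have h1 : Ideal.Quotient.mk M (x * q + m) = 1 := by rw [hxm]; simp
      rwa [map_add, Ideal.Quotient.eq_zero_iff_mem.mpr hm, add_zero] at h1
    rw [this]; exact D.one_mem
  have hmR : m ∈ R := by
    rw [hR]
    show Ideal.Quotient.mk M m ∈ D
    rw [Ideal.Quotient.eq_zero_iff_mem.mpr hm]; exact D.zero_mem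
  have h1 : (⟨x * q, hyR⟩ : R) ∈ P := hQP (by simpa using hyQ)
  have h2 : (⟨m, hmR⟩ : R) ∈ P := hMP (by simpa using hm)
  have h3 : (1 : ↥R) ∈ P := by
    have : (⟨x * q, hyR⟩ : R) + ⟨m, hmR⟩ = 1 := by
      ext; simpa using hxm
    rw [← this]; exact P.add_mem h1 h2
  exact hP.ne_top (Ideal.eq_top_of_isUnit_mem P h3 isUnit_one)
end

section
/- In a pullback diagram of type (□) with T quasilocal and D a proper subfield of the residue field k = T/M: for every star operation ∗ on R = φ⁻¹(D), every ∗-invertible ∗-ideal of R is principal; hence Cl^∗(R) = 0. -/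
open FractionalIdeal

/-- A star operation on an integral domain `R` with quotient field `K`, acting on the
nonzero fractional ideals (the value on the zero ideal is irrelevant). -/
structure StarOp (R K : Type*) [CommRing R] [IsDomain R] [Field K] [Algebra R K]
    [IsFractionRing R K] where
  toFun : FractionalIdeal (nonZeroDivisors R) K → FractionalIdeal (nonZeroDivisors R) K
  star_spanSingleton : ∀ x : K, x ≠ 0 →
    toFun (spanSingleton (nonZeroDivisors R) x) = spanSingleton (nonZeroDivisors R) x
  star_smul : ∀ (x : K) (E : FractionalIdeal (nonZeroDivisors R) K), x ≠ 0 → E ≠ 0 →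
    toFun (spanSingleton (nonZeroDivisors R) x * E) = spanSingleton (nonZeroDivisors R) x * toFun E
  mono : ∀ E F : FractionalIdeal (nonZeroDivisors R) K, E ≠ 0 → F ≠ 0 → E ≤ F →
    toFun E ≤ toFun F
  le_star : ∀ E : FractionalIdeal (nonZeroDivisors R) K, E ≠ 0 → E ≤ toFun E
  star_idem : ∀ E : FractionalIdeal (nonZeroDivisors R) K, E ≠ 0 → toFun (toFun E) = toFun E

/-- `I` is a `⋆`-invertible `⋆`-ideal of `R`: `I ≠ 0`, `I = I^⋆` and `(I·I⁻¹)^⋆ = R`. -/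
def IsStarInv {R K : Type*} [CommRing R] [IsDomain R] [Field K] [Algebra R K]
    [IsFractionRing R K] (s : StarOp R K)
    (I : FractionalIdeal (nonZeroDivisors R) K) : Prop :=
  I ≠ 0 ∧ s.toFun I = I ∧ s.toFun (I * (1 / I)) = 1

attribute [local instance] Ideal.Quotient.field

/-!
`R` is local, because an element of `R` that is a unit of `T` has its inverse in `R`. So if
`I I⁻¹ = R`, then `I` is invertible in a local domain, hence principal. Otherwise `I I⁻¹` lies in
the maximal ideal of `R`, which is contained in `M ⊆ R`; hence `t I I⁻¹ ⊆ R` for every `t ∈ T`.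
Applying `⋆` gives `t R = t (I I⁻¹)^⋆ ⊆ R`, so `T = R`, i.e. `D = k`.
-/

open IsLocalRing
open scoped nonZeroDivisors

namespace FractionalIdeal

protected theorem mul_ne_zero {R P : Type*} [CommRing R] [CommRing P] [NoZeroDivisors P]
    [Algebra R P] {S : Submonoid R} {I J : FractionalIdeal S P} (hI : I ≠ 0) (hJ : J ≠ 0) :
    I * J ≠ 0 := by
  rw [← coeToSubmodule_ne_bot, coe_mul]
  exact mul_ne_zero (coeToSubmodule_ne_bot.2 hI) (coeToSubmodule_ne_bot.2 hJ)

variable {R K : Type*} [CommRing R] [Field K] [Algebra R K] [IsFractionRing R K]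

theorem one_div_ne_zero [IsDomain R] {I : FractionalIdeal R⁰ K} (hI : I ≠ 0) : 1 / I ≠ 0 := by
  obtain ⟨a, ha, haI⟩ := I.isFractional
  have ha_mem : algebraMap R K a ∈ 1 / I := by
    refine (mem_div_iff_of_ne_zero hI).2 fun y hy => ?_
    obtain ⟨c, hc⟩ := haI y hy
    exact (mem_one_iff _).2 ⟨c, by rw [hc, Algebra.smul_def]⟩
  intro h
  rw [h, mem_zero_iff] at ha_mem
  exact IsFractionRing.to_map_ne_zero_of_mem_nonZeroDivisors ha ha_mem

theorem le_maximalIdeal_of_le_one_of_ne_one [IsLocalRing R] {J : FractionalIdeal R⁰ K}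
    (hJ : J ≤ 1) (hJ1 : J ≠ 1) : J ≤ (maximalIdeal R : FractionalIdeal R⁰ K) := by
  obtain ⟨J₀, rfl⟩ := le_one_iff_exists_coeIdeal.mp hJ
  refine (coeIdeal_le_coeIdeal K).2 (le_maximalIdeal fun h => hJ1 ?_)
  rw [h, coeIdeal_top]

theorem exists_eq_spanSingleton_of_mul_eq_one [IsLocalRing R] {I J : FractionalIdeal R⁰ K}
    (h : I * J = 1) : ∃ x : K, x ≠ 0 ∧ I = spanSingleton R⁰ x := by
  have hfin : {P : Ideal R | P.IsMaximal}.Finite :=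
    (Set.finite_singleton (maximalIdeal R)).subset fun P hP => eq_maximalIdeal hP
  obtain ⟨x, rfl⟩ :=
    (isPrincipal_iff I).1 (isPrincipal.of_finite_maximals_of_inv le_rfl hfin I J h)
  exact ⟨x, fun hx => ne_zero_of_mul_eq_one _ _ h (by rw [hx, spanSingleton_zero]), rfl⟩

end FractionalIdeal

namespace StarOp

variable {R K : Type*} [CommRing R] [IsDomain R] [Field K] [Algebra R K] [IsFractionRing R K]

theorem toFun_one (s : StarOp R K) : s.toFun 1 = 1 := by
  simpa only [spanSingleton_one] using s.star_spanSingleton 1 one_ne_zero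

theorem one_div_le_one_of_toFun_eq_one (s : StarOp R K) {J : FractionalIdeal R⁰ K}
    (hJ : J ≠ 0) (hsJ : s.toFun J = 1) : 1 / J ≤ 1 := by
  intro x hx
  obtain rfl | hx0 := eq_or_ne x 0
  · exact zero_mem _
  have hxJ : spanSingleton R⁰ x * J ≤ 1 := by
    rw [spanSingleton_mul_le_iff]
    exact (mem_div_iff_of_ne_zero hJ).1 hx
  have hxJ0 := FractionalIdeal.mul_ne_zero (spanSingleton_ne_zero_iff.2 hx0) hJ
  have := s.mono _ _ hxJ0 one_ne_zero hxJ
  rw [s.star_smul x J hx0 hJ, hsJ, mul_one, toFun_one] at this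
  exact spanSingleton_le_iff_mem.1 this

end StarOp

namespace Subfield

variable {A F : Type*} [CommRing A] [Field F] (f : A →+* F) (D : Subfield F)

theorem mem_comap_of_mem_ker {x : A} (hx : x ∈ RingHom.ker f) : x ∈ D.toSubring.comap f := by
  rw [RingHom.mem_ker] at hx
  change f x ∈ D
  rw [hx]
  exact D.zero_mem

theorem isUnit_of_isUnit_of_mem_comap (x : A) (hx : x ∈ D.toSubring.comap f) (hu : IsUnit x) :
    IsUnit (⟨x, hx⟩ : D.toSubring.comap f) := by
  obtain ⟨u, rfl⟩ := hu
  have hinv : f ↑u⁻¹ = (f u)⁻¹ := eq_inv_of_mul_eq_one_left (by rw [← map_mul, u.inv_mul, map_one])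
  have hmem : (↑u⁻¹ : A) ∈ D.toSubring.comap f := by
    change f ↑u⁻¹ ∈ D
    rw [hinv]
    exact D.inv_mem hx
  exact IsUnit.of_mul_eq_one (⟨↑u⁻¹, hmem⟩ : D.toSubring.comap f) (Subtype.ext u.mul_inv)

instance isLocalRing_comap [IsLocalRing A] : IsLocalRing (D.toSubring.comap f) :=
  Subring.isLocalRing_of_unit _ (isUnit_of_isUnit_of_mem_comap f D)

theorem mul_mem_comap_of_mem_maximalIdeal [IsLocalRing A] (hf : RingHom.ker f = maximalIdeal A)
    (t : A) {r : D.toSubring.comap f} (hr : r ∈ maximalIdeal (D.toSubring.comap f)) :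
    t * r ∈ D.toSubring.comap f := by
  refine mem_comap_of_mem_ker f D (hf ▸ Ideal.mul_mem_left _ t ?_)
  by_contra hrA
  rw [mem_maximalIdeal, mem_nonunits_iff, not_not] at hrA
  rw [mem_maximalIdeal, mem_nonunits_iff] at hr
  exact hr (isUnit_of_isUnit_of_mem_comap f D r r.2 hrA)

end Subfield

namespace Subring

variable {T K : Type*} [CommRing T] [Field K] [Algebra T K] {R : Subring T}

theorem algebraMap_mem_one_div [IsDomain R] [IsFractionRing R K] {m : Ideal R}
    {J : FractionalIdeal R⁰ K} (hJ : J ≠ 0) (hJm : J ≤ m) {t : T} (ht : ∀ r ∈ m, t * r ∈ R) :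
    algebraMap T K t ∈ 1 / J := by
  refine (mem_div_iff_of_ne_zero hJ).2 fun y hy => ?_
  obtain ⟨r, hr, rfl⟩ := (mem_coeIdeal _).1 (hJm hy)
  refine (mem_one_iff _).2 ⟨⟨t * r, ht r hr⟩, ?_⟩
  change algebraMap T K (t * r) = _
  rw [map_mul]
  rfl

theorem mem_of_algebraMap_mem_one [IsFractionRing T K] {t : T}
    (ht : algebraMap T K t ∈ (1 : FractionalIdeal R⁰ K)) : t ∈ R := by
  obtain ⟨r, hr⟩ := (mem_one_iff _).1 ht
  exact IsFractionRing.injective T K hr ▸ r.2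

end Subring

theorem starInv_principal_of_local_subfield_general
    {T K : Type*} [CommRing T] [IsDomain T] [IsLocalRing T]
    [Field K] [Algebra T K] [IsFractionRing T K]
    (M : Ideal T) [M.IsMaximal]
    (D : Subfield (T ⧸ M)) (hD : D ≠ ⊤)
    (R : Subring T) (hR : R = D.toSubring.comap (Ideal.Quotient.mk M))
    [IsFractionRing ↥R K]
    (s : StarOp ↥R K) (I : FractionalIdeal (nonZeroDivisors ↥R) K) (hI : I ≠ 0)
    (hinv : s.toFun (I * (1 / I)) = 1) :
    ∃ x : K, x ≠ 0 ∧ I = FractionalIdeal.spanSingleton (nonZeroDivisors ↥R) x := by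
  subst hR
  by_cases hJ : I * (1 / I) = 1
  · exact exists_eq_spanSingleton_of_mul_eq_one hJ
  have hker : RingHom.ker (Ideal.Quotient.mk M) = maximalIdeal T := by
    rw [Ideal.mk_ker]
    exact eq_maximalIdeal ‹_›
  have hJ0 : I * (1 / I) ≠ 0 := FractionalIdeal.mul_ne_zero hI (one_div_ne_zero hI)
  have hJm := le_maximalIdeal_of_le_one_of_ne_one mul_one_div_le_one hJ
  have hT (t : T) : t ∈ D.toSubring.comap (Ideal.Quotient.mk M) :=
    Subring.mem_of_algebraMap_mem_one <| s.one_div_le_one_of_toFun_eq_one hJ0 hinv <|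
      Subring.algebraMap_mem_one_div hJ0 hJm fun _ hr =>
        Subfield.mul_mem_comap_of_mem_maximalIdeal _ D hker t hr
  refine absurd (eq_top_iff.2 fun c _ => ?_) hD
  obtain ⟨t, rfl⟩ := Ideal.Quotient.mk_surjective c
  exact hT t

/-- In a pullback of type (□) with `T` quasilocal and `D` a proper subfield of `k = T/M`:
every `∗`-invertible `∗`-ideal of `R = φ⁻¹(D)` is principal; hence `Cl^∗(R) = 0`. -/
theorem starInv_principal_of_local_subfield
    {T K : Type*} [CommRing T] [IsDomain T] [IsLocalRing T]
    [Field K] [Algebra T K] [IsFractionRing T K]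
    (M : Ideal T) [M.IsMaximal] (hM : M ≠ ⊥)
    (D : Subfield (T ⧸ M)) (hD : D ≠ ⊤)
    (R : Subring T) (hR : R = D.toSubring.comap (Ideal.Quotient.mk M))
    [IsFractionRing ↥R K]
    (s : StarOp ↥R K) (I : FractionalIdeal (nonZeroDivisors ↥R) K) (hI : I ≠ 0)
    (hstar : s.toFun I = I) (hinv : s.toFun (I * (1 / I)) = 1) :
    ∃ x : K, x ≠ 0 ∧ I = FractionalIdeal.spanSingleton (nonZeroDivisors ↥R) x :=
  starInv_principal_of_local_subfield_general M D hD R hR s I hI hinv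
end

section
/- In a pullback diagram of type (□⁺), the following are equivalent: (1) the canonical map U(T) → k^•/U(D), u ↦ φ(u)·U(D), is surjective; (2) for each nonzero x ∈ k, φ⁻¹(xD) is a principal fractional ideal of R. -/
private lemma subring_smul_eq {T K : Type*} [CommRing T] [Field K] [Algebra T K]
    (R : Subring T) (r : ↥R) (z : K) :
    r • z = algebraMap T K (r : T) * z := by
  rw [← Algebra.smul_def, ← algebraMap_smul T r z]
  norm_cast

/-- In a pullback of type (□⁺), the following are equivalent:
(1) the canonical map `U(T) → k^•/U(D)`, `u ↦ φ(u)·U(D)`, is surjective;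
(2) for each nonzero `x ∈ k`, `φ⁻¹(xD)` is a principal fractional ideal of `R`
    (inside the common quotient field `K`). -/
theorem units_surjective_iff_preimage_principal
    {T K : Type*} [CommRing T] [IsDomain T] [Field K] [Algebra T K] [IsFractionRing T K]
    (M : Ideal T) [M.IsMaximal] (hM : M ≠ ⊥)
    (D : Subring (T ⧸ M)) (hD : D ≠ ⊤)
    (hQF : ∀ x : T ⧸ M, ∃ a b : ↥D, (b : T ⧸ M) ≠ 0 ∧ x * (b : T ⧸ M) = (a : T ⧸ M))
    (R : Subring T) (hR : R = D.comap (Ideal.Quotient.mk M)) :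
    (∀ x : T ⧸ M, x ≠ 0 → ∃ (u : Tˣ) (d : ↥D), IsUnit d ∧
        Ideal.Quotient.mk M (u : T) = x * (d : T ⧸ M)) ↔
    (∀ x : T ⧸ M, x ≠ 0 → ∃ y : K,
        Submodule.span ↥R (algebraMap T K ''
          {t : T | ∃ d : ↥D, Ideal.Quotient.mk M t = x * (d : T ⧸ M)}) =
        Submodule.span ↥R {y}) := by
  set φ := Ideal.Quotient.mk M with hφ
  set f := algebraMap T K with hf
  have hfinj : Function.Injective f := IsFractionRing.injective T K
  have hRmem : ∀ t : T, t ∈ R ↔ φ t ∈ D := by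
    intro t; rw [hR]; exact Iff.rfl
  constructor
  · -- (1) → (2)
    intro h1 x hx
    obtain ⟨u, d, hdu, hu⟩ := h1 x hx
    refine ⟨f (u : T), ?_⟩
    obtain ⟨dinv, hdinv⟩ := hdu.exists_right_inv
    have hd1 : (d : T ⧸ M) * (dinv : T ⧸ M) = 1 := by
      have := congrArg (Subring.subtype D) hdinv
      simpa using this
    have hxd : x * (d : T ⧸ M) ≠ 0 := by
      intro h0
      rcases mul_eq_zero.mp h0 with h | h
      · exact hx h
      · rw [h, zero_mul] at hd1; exact zero_ne_one hd1
    apply le_antisymm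
    · rw [Submodule.span_le]
      rintro z ⟨t, ⟨d', hd'⟩, rfl⟩
      have hmem : (t * ((u⁻¹ : Tˣ) : T)) ∈ R := by
        rw [hRmem]
        have key : φ (t * ((u⁻¹ : Tˣ) : T)) * (x * (d : T ⧸ M)) =
            ((d' : T ⧸ M) * (dinv : T ⧸ M)) * (x * (d : T ⧸ M)) := by
          have h1' : φ (t * ((u⁻¹ : Tˣ) : T)) * φ (u : T) = φ t := by
            rw [← map_mul, mul_assoc, Units.inv_mul, mul_one]
          calc φ (t * ((u⁻¹ : Tˣ) : T)) * (x * (d : T ⧸ M))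
              = φ (t * ((u⁻¹ : Tˣ) : T)) * φ (u : T) := by rw [hu]
            _ = φ t := h1'
            _ = x * (d' : T ⧸ M) := hd'
            _ = x * (d' : T ⧸ M) * ((d : T ⧸ M) * (dinv : T ⧸ M)) := by
                rw [hd1, mul_one]
            _ = (d' : T ⧸ M) * (dinv : T ⧸ M) * (x * (d : T ⧸ M)) := by ring
        have := mul_right_cancel₀ hxd key
        rw [this]
        exact Subring.mul_mem D d'.2 dinv.2
      apply Submodule.mem_span_singleton.mpr
      refine ⟨⟨_, hmem⟩, ?_⟩
      rw [subring_smul_eq]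
      rw [← map_mul]
      congr 1
      rw [mul_assoc, Units.inv_mul, mul_one]
    · rw [Submodule.span_le, Set.singleton_subset_iff]
      exact Submodule.subset_span ⟨(u : T), ⟨d, hu⟩, rfl⟩
  · -- (2) → (1)
    intro h2 x hx
    obtain ⟨y, hy⟩ := h2 x hx
    set S : Set T := {t : T | ∃ d : ↥D, φ t = x * (d : T ⧸ M)} with hS
    have hSsub : ∀ t₁ ∈ S, ∀ t₂ ∈ S, t₁ + t₂ ∈ S := by
      rintro t₁ ⟨d₁, h1⟩ t₂ ⟨d₂, h2'⟩
      exact ⟨d₁ + d₂, by push_cast; rw [map_add, h1, h2', mul_add]⟩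
    have hS0 : (0 : T) ∈ S := ⟨0, by simp⟩
    have hSsmul : ∀ (r : ↥R) (t : T), t ∈ S → (r : T) * t ∈ S := by
      rintro r t ⟨d', hd'⟩
      have hrD : φ (r : T) ∈ D := (hRmem _).mp r.2
      exact ⟨⟨φ (r : T), hrD⟩ * d', by push_cast; rw [map_mul, hd']; ring⟩
    set S' : Submodule ↥R T :=
      { carrier := S
        add_mem' := fun ha hb => hSsub _ ha _ hb
        zero_mem' := hS0
        smul_mem' := fun r t ht => by
          have : r • t = (r : T) * t := rfl
          rw [this]; exact hSsmul r t ht } with hS'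
    have hmap : Submodule.span ↥R (f '' S) =
        S'.map ((Algebra.linearMap T K).restrictScalars ↥R) := by
      apply le_antisymm
      · rw [Submodule.span_le]
        rintro z ⟨t, ht, rfl⟩
        exact ⟨t, ht, rfl⟩
      · rintro z ⟨t, ht, rfl⟩
        exact Submodule.subset_span ⟨t, ht, rfl⟩
    have hy' : S'.map ((Algebra.linearMap T K).restrictScalars ↥R) =
        Submodule.span ↥R {y} := by rw [← hmap]; exact hy
    have hymem : y ∈ S'.map ((Algebra.linearMap T K).restrictScalars ↥R) := by
      rw [hy']; exact Submodule.mem_span_singleton_self y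
    obtain ⟨u, huS, huy⟩ := hymem
    obtain ⟨d₀, hd₀⟩ := huS
    have hkey : ∀ t ∈ S, ∃ r : ↥R, t = (r : T) * u := by
      intro t ht
      have : f t ∈ Submodule.span ↥R {y} := by
        rw [← hy']; exact ⟨t, ht, rfl⟩
      obtain ⟨r, hr⟩ := Submodule.mem_span_singleton.mp this
      refine ⟨r, hfinj ?_⟩
      show f t = f ((r : T) * u)
      rw [map_mul, ← hr, ← huy, subring_smul_eq]
      rfl
    obtain ⟨a, b, hb, hab⟩ := hQF x
    have haD : x * (b : T ⧸ M) ≠ 0 := mul_ne_zero hx hb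
    obtain ⟨t₀, ht₀⟩ := Ideal.Quotient.mk_surjective (I := M) (x * (b : T ⧸ M))
    have ht₀S : t₀ ∈ S := ⟨b, ht₀⟩
    have hd₀ne : (d₀ : T ⧸ M) ≠ 0 := by
      intro h0
      obtain ⟨r, hr⟩ := hkey t₀ ht₀S
      apply haD
      rw [← ht₀, hr, map_mul, hd₀, h0, mul_zero, mul_zero]
    have hφu : φ u ≠ 0 := by rw [hd₀]; exact mul_ne_zero hx hd₀ne
    have hune : u ≠ 0 := by intro h; rw [h, map_zero] at hφu; exact hφu rfl
    obtain ⟨c, hc⟩ := Ideal.Quotient.exists_inv (I := M) hd₀ne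
    obtain ⟨t₁, ht₁⟩ := Ideal.Quotient.mk_surjective (I := M) c
    have hut₁ : u * t₁ ∈ S := by
      refine ⟨1, ?_⟩
      rw [map_mul, hd₀, ht₁]
      push_cast
      rw [mul_one, mul_assoc, hc, mul_one]
    obtain ⟨r₁, hr₁⟩ := hkey (u * t₁) hut₁
    have ht₁r : t₁ = (r₁ : T) := by
      have : u * (t₁ - (r₁ : T)) = 0 := by rw [mul_sub, hr₁]; ring
      rcases mul_eq_zero.mp this with h | h
      · exact absurd h hune
      · exact sub_eq_zero.mp h
    have hcD : c ∈ D := by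
      rw [← ht₁, ht₁r]
      exact (hRmem _).mp r₁.2
    have hd₀unit : IsUnit d₀ := by
      refine isUnit_iff_exists_inv.mpr ⟨⟨c, hcD⟩, ?_⟩
      ext; push_cast; exact hc
    have huM : u ∉ M := fun h => hφu (Ideal.Quotient.eq_zero_iff_mem.mpr h)
    obtain ⟨v, m, hm, hvm⟩ := (Ideal.IsMaximal.exists_inv ‹M.IsMaximal› huM)
    have hmS : m ∈ S := by
      refine ⟨0, ?_⟩
      push_cast
      rw [mul_zero]
      exact Ideal.Quotient.eq_zero_iff_mem.mpr hm
    obtain ⟨r₂, hr₂⟩ := hkey m hmS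
    have huunit : IsUnit u := by
      refine isUnit_iff_exists_inv.mpr ⟨v + (r₂ : T), ?_⟩
      calc u * (v + (r₂ : T)) = v * u + (r₂ : T) * u := by ring
        _ = v * u + m := by rw [← hr₂]
        _ = 1 := hvm
    exact ⟨huunit.unit, d₀, hd₀unit, by rw [IsUnit.unit_spec]; exact hd₀⟩
end

section
/- Let R be a Prüfer v-multiplication domain (PvMD) and T a flat overring of R with (R : T) ≠ 0. Then for every nonzero finitely generated ideal I of R, (IT)^{t_T} = I^{v_R}·T; consequently the extension to T of the t-operation of R coincides with the t-operation of T: (t_R)_T = t_T. -/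
open FractionalIdeal

/-- The `t`-closure of a fractional ideal `E` of `A` (inside a field `K`): the union of
`F^{v_A} = 1/(1/F)` over the nonzero finitely generated fractional subideals `F ⊆ E`. -/
noncomputable def tClos (A : Type*) {K : Type*} [CommRing A] [IsDomain A] [Field K]
    [Algebra A K] [IsFractionRing A K]
    (E : FractionalIdeal (nonZeroDivisors A) K) : Submodule A K :=
  ⨆ F : {F : FractionalIdeal (nonZeroDivisors A) K //
      F ≠ 0 ∧ (F : Submodule A K).FG ∧ F ≤ E},
    ((1 / (1 / F.1) : FractionalIdeal (nonZeroDivisors A) K) : Submodule A K)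

set_option linter.unusedSectionVars false

section
section ColonS

variable {K : Type*} [CommRing K]

/-- colon submodule -/
def colonS (A : Type*) {K : Type*} [CommSemiring A] [CommRing K] [Algebra A K]
    (E : Submodule A K) (S : Set K) : Submodule A K where
  carrier := {x | ∀ y ∈ S, x * y ∈ E}
  add_mem' := by
    intro a b ha hb y hy
    rw [add_mul]; exact E.add_mem (ha y hy) (hb y hy)
  zero_mem' := by intro y hy; rw [zero_mul]; exact E.zero_mem
  smul_mem' := by
    intro c x hx y hy
    rw [smul_mul_assoc]; exact E.smul_mem c (hx y hy)

@[simp] lemma mem_colonS {A : Type*} [CommSemiring A] [Algebra A K]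
    {E : Submodule A K} {S : Set K} {x : K} :
    x ∈ colonS A E S ↔ ∀ y ∈ S, x * y ∈ E := Iff.rfl

lemma colonS_singleton_zero {A : Type*} [CommSemiring A] [Algebra A K]
    (E : Submodule A K) : colonS A E {(0 : K)} = ⊤ := by
  ext x; simp [mem_colonS]

lemma colonS_insert {A : Type*} [CommSemiring A] [Algebra A K]
    (E : Submodule A K) (a : K) (s : Set K) :
    colonS A E (insert a s) = colonS A E {a} ⊓ colonS A E s := by
  ext x
  simp only [mem_colonS, Set.mem_insert_iff, Submodule.mem_inf, Set.mem_singleton_iff]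
  constructor
  · exact fun h => ⟨fun y hy => h y (Or.inl hy), fun y hy => h y (Or.inr hy)⟩
  · rintro ⟨h1, h2⟩ y (rfl | hy)
    · exact h1 y rfl
    · exact h2 y hy

lemma colonS_empty {A : Type*} [CommSemiring A] [Algebra A K]
    (E : Submodule A K) : colonS A E (∅ : Set K) = ⊤ := by
  ext x; simp [mem_colonS]

/-- A colon into an `A`-submodule is unchanged by replacing the set by its `A'`-span,
provided `E` is stable under the `A'`-action. -/
lemma colonS_span {A A' : Type*} [CommSemiring A] [Algebra A K] [Semiring A']
    [Module A' K] [SMulCommClass A' A K]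
    (hmul : ∀ (a : A') (x y : K), x * (a • y) = a • (x * y))
    (E : Submodule A K) (hE : ∀ (a : A') (z : K), z ∈ E → a • z ∈ E) (s : Set K) :
    colonS A E ((Submodule.span A' s : Submodule A' K) : Set K) = colonS A E s := by
  apply le_antisymm
  · intro x hx y hy
    exact hx y (Submodule.subset_span hy)
  · intro x hx y hy
    induction hy using Submodule.span_induction with
    | mem z hz => exact hx z hz
    | zero => rw [mul_zero]; exact E.zero_mem
    | add z w _ _ hz hw => rw [mul_add]; exact E.add_mem hz hw
    | smul a z _ hz => rw [hmul a x z]; exact hE a _ hz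

end ColonS
open FractionalIdeal TensorProduct

set_option linter.unusedSectionVars false

section Ext

variable {R K : Type*} [CommRing R] [IsDomain R] [Field K] [Algebra R K] [IsFractionRing R K]
  (T : Subalgebra R K)

/-- `T`-span of an `R`-submodule of `K`. -/
def extS (M : Submodule R K) : Submodule ↥T K := Submodule.span ↥T (M : Set K)

lemma subset_extS (M : Submodule R K) : (M : Set K) ⊆ extS T M := Submodule.subset_span

lemma extS_mono {M N : Submodule R K} (h : M ≤ N) : extS T M ≤ extS T N :=
  Submodule.span_mono h

lemma extS_le_iff {M : Submodule R K} {N : Submodule ↥T K} :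
    extS T M ≤ N ↔ (M : Set K) ⊆ N := Submodule.span_le

lemma extS_top : extS T (⊤ : Submodule R K) = ⊤ := by
  rw [extS]
  simp

/-- multiplication map `K ⊗[R] T → K`. -/
noncomputable def muT : K ⊗[R] ↥T →ₗ[R] K :=
  TensorProduct.lift ((LinearMap.mul R K).compl₂ T.val.toLinearMap)

@[simp] lemma muT_tmul (k : K) (t : ↥T) : muT T (k ⊗ₜ[R] t) = k * (t : K) := rfl

lemma exists_smul_one_tmul_one (x : K ⊗[R] ↥T) :
    ∃ k : K, x = k • ((1 : K) ⊗ₜ[R] (1 : ↥T)) := by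
  induction x with
  | zero => exact ⟨0, by simp⟩
  | add y z hy hz =>
    obtain ⟨k1, rfl⟩ := hy; obtain ⟨k2, rfl⟩ := hz
    exact ⟨k1 + k2, by rw [add_smul]⟩
  | tmul k t =>
    refine ⟨k * (t : K), ?_⟩
    obtain ⟨a, b, hb, hab⟩ := IsFractionRing.div_surjective (A := R) (t : K)
    have hbK : algebraMap R K b ≠ 0 :=
      IsFractionRing.to_map_ne_zero_of_mem_nonZeroDivisors hb
    have hbt : b • t = a • (1 : ↥T) := by
      apply Subtype.ext
      have h : (algebraMap R K b) * (t : K) = algebraMap R K a := by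
        rw [← hab]; field_simp
      simpa [Algebra.smul_def] using h
    have h1t : (1 : K) ⊗ₜ[R] t = (t : K) • ((1 : K) ⊗ₜ[R] (1 : ↥T)) := by
      have h1 : (algebraMap R K b) • ((1 : K) ⊗ₜ[R] t)
          = (algebraMap R K b) • ((t : K) • ((1 : K) ⊗ₜ[R] (1 : ↥T))) := by
        have hL : (algebraMap R K b) • ((1 : K) ⊗ₜ[R] t)
            = (a : R) • ((1 : K) ⊗ₜ[R] (1 : ↥T)) := by
          rw [algebraMap_smul, ← TensorProduct.tmul_smul, hbt, TensorProduct.tmul_smul]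
        have hR : (algebraMap R K b) • ((t : K) • ((1 : K) ⊗ₜ[R] (1 : ↥T)))
            = (a : R) • ((1 : K) ⊗ₜ[R] (1 : ↥T)) := by
          rw [smul_smul]
          have h2 : (algebraMap R K b) * (t : K) = algebraMap R K a := by
            rw [← hab]; field_simp
          rw [h2, algebraMap_smul]
        rw [hL, hR]
      have h3 : (1 : K) ⊗ₜ[R] t
          = ((algebraMap R K b)⁻¹ * (algebraMap R K b)) • ((1 : K) ⊗ₜ[R] t) := by
        rw [inv_mul_cancel₀ hbK, one_smul]
      rw [h3, ← smul_smul, h1, smul_smul, inv_mul_cancel₀ hbK, one_smul]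
    calc k ⊗ₜ[R] t = k • ((1 : K) ⊗ₜ[R] t) := by rw [smul_tmul', smul_eq_mul, mul_one]
    _ = k • ((t : K) • ((1 : K) ⊗ₜ[R] (1 : ↥T))) := by rw [h1t]
    _ = (k * (t : K)) • ((1 : K) ⊗ₜ[R] (1 : ↥T)) := by rw [smul_smul]

lemma muT_injective : Function.Injective (muT T) := by
  intro x y hxy
  obtain ⟨k1, rfl⟩ := exists_smul_one_tmul_one T x
  obtain ⟨k2, rfl⟩ := exists_smul_one_tmul_one T y
  have h1 : ∀ k : K, muT T (k • ((1:K) ⊗ₜ[R] (1:↥T))) = k := by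
    intro k; rw [smul_tmul', smul_eq_mul, mul_one]; simp
  rw [h1, h1] at hxy
  rw [hxy]

end Ext

section Psi

variable {R K : Type*} [CommRing R] [IsDomain R] [Field K] [Algebra R K] [IsFractionRing R K]
  (T : Subalgebra R K)

/-- The map `P ⊗[R] T → K`. -/
noncomputable def psiT (P : Submodule R K) : P ⊗[R] ↥T →ₗ[R] K :=
  (muT T).comp (LinearMap.rTensor ↥T P.subtype)

@[simp] lemma psiT_tmul (P : Submodule R K) (p : P) (t : ↥T) :
    psiT T P (p ⊗ₜ[R] t) = (p : K) * (t : K) := rfl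

lemma smul_psiT (P : Submodule R K) (t : ↥T) (y : P ⊗[R] ↥T) :
    ∃ y' : P ⊗[R] ↥T, psiT T P y' = t • psiT T P y := by
  induction y with
  | zero => exact ⟨0, by simp⟩
  | add u v hu hv =>
    obtain ⟨u', hu'⟩ := hu; obtain ⟨v', hv'⟩ := hv
    exact ⟨u' + v', by rw [_root_.map_add, _root_.map_add, hu', hv', smul_add]⟩
  | tmul p s =>
    refine ⟨p ⊗ₜ[R] (t * s), ?_⟩
    simp only [psiT_tmul]
    rw [Algebra.smul_def]
    have h : (algebraMap (↥T) K) t = (t : K) := rfl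
    rw [h]
    push_cast
    ring

lemma mem_extS_iff_psiT (P : Submodule R K) (x : K) :
    x ∈ extS T P ↔ x ∈ LinearMap.range (psiT T P) := by
  constructor
  · intro hx
    induction hx using Submodule.span_induction with
    | mem z hz => exact ⟨⟨z, hz⟩ ⊗ₜ[R] 1, by simp⟩
    | zero => exact ⟨0, by simp⟩
    | add u v _ _ hu hv =>
      obtain ⟨u', hu'⟩ := hu; obtain ⟨v', hv'⟩ := hv
      exact ⟨u' + v', by rw [_root_.map_add, hu', hv']⟩
    | smul t z _ hz =>
      obtain ⟨y, hy⟩ := hz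
      obtain ⟨y', hy'⟩ := smul_psiT T P t y
      exact ⟨y', by rw [hy', hy]⟩
  · rintro ⟨y, rfl⟩
    induction y with
    | zero => simp
    | add u v hu hv => rw [_root_.map_add]; exact Submodule.add_mem _ hu hv
    | tmul p t =>
      have h : psiT T P (p ⊗ₜ[R] t) = t • (p : K) := by
        rw [psiT_tmul, Algebra.smul_def]
        have h2 : (algebraMap (↥T) K) t = (t : K) := rfl
        rw [h2, mul_comm]
      rw [h]
      exact Submodule.smul_mem _ t (subset_extS T P p.2)

lemma flat_inf [Module.Flat R ↥T] (M N : Submodule R K) {x : K}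
    (hM : x ∈ extS T M) (hN : x ∈ extS T N) : x ∈ extS T (M ⊓ N) := by
  classical
  set f : ↥(M ⊓ N) →ₗ[R] ↥M × ↥N :=
    (Submodule.inclusion inf_le_left).prod (-(Submodule.inclusion inf_le_right)) with hf
  set g : ↥M × ↥N →ₗ[R] K :=
    (M.subtype.comp (LinearMap.fst R ↥M ↥N)) + (N.subtype.comp (LinearMap.snd R ↥M ↥N)) with hg
  have hexact : Function.Exact f g := by
    intro y
    constructor
    · intro hy
      have hsum : (y.1 : K) + (y.2 : K) = 0 := hy
      refine ⟨⟨(y.1 : K), ⟨y.1.2, ?_⟩⟩, ?_⟩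
      · have h2 : (y.1 : K) = -(y.2 : K) := by linear_combination hsum
        rw [h2]; exact N.neg_mem y.2.2
      · apply Prod.ext
        · apply Subtype.ext; rfl
        · apply Subtype.ext
          show -(y.1 : K) = (y.2 : K)
          linear_combination -hsum
    · rintro ⟨c, rfl⟩
      show ((c : K)) + (-(c : K)) = 0
      ring
  have hexactT : Function.Exact (f.rTensor ↥T) (g.rTensor ↥T) :=
    Module.Flat.rTensor_exact ↥T hexact
  rw [mem_extS_iff_psiT] at hM hN ⊢
  obtain ⟨u, hu⟩ := hM
  obtain ⟨v, hv⟩ := hN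
  set w : (↥M × ↥N) ⊗[R] ↥T :=
    (LinearMap.inl R ↥M ↥N).rTensor ↥T u - (LinearMap.inr R ↥M ↥N).rTensor ↥T v with hw
  have hgw : g.rTensor ↥T w = 0 := by
    apply muT_injective T
    rw [(muT T).map_zero, hw, _root_.map_sub,
      ← LinearMap.rTensor_comp_apply, ← LinearMap.rTensor_comp_apply]
    have hgl : g.comp (LinearMap.inl R ↥M ↥N) = M.subtype := by
      ext m; show (m : K) + ((0 : ↥N) : K) = (m : K); simp
    have hgr : g.comp (LinearMap.inr R ↥M ↥N) = N.subtype := by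
      ext n; show ((0 : ↥M) : K) + (n : K) = (n : K); simp
    rw [hgl, hgr, _root_.map_sub]
    show muT T ((M.subtype.rTensor ↥T) u) - muT T ((N.subtype.rTensor ↥T) v) = 0
    have h1 : muT T ((M.subtype.rTensor ↥T) u) = psiT T M u := rfl
    have h2 : muT T ((N.subtype.rTensor ↥T) v) = psiT T N v := rfl
    rw [h1, h2, hu, hv, sub_self]
  obtain ⟨c, hc⟩ := (hexactT w).mp hgw
  have hfst : (LinearMap.fst R ↥M ↥N).rTensor ↥T w = u := by
    rw [hw, _root_.map_sub, ← LinearMap.rTensor_comp_apply, ← LinearMap.rTensor_comp_apply]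
    have h1 : (LinearMap.fst R ↥M ↥N).comp (LinearMap.inl R ↥M ↥N) = LinearMap.id := by
      ext m; rfl
    have h2 : (LinearMap.fst R ↥M ↥N).comp (LinearMap.inr R ↥M ↥N) = 0 := by
      ext n; rfl
    rw [h1, h2, LinearMap.rTensor_id, LinearMap.rTensor_zero]
    simp
  have hcomp : (LinearMap.fst R ↥M ↥N).comp f
      = Submodule.inclusion (inf_le_left : M ⊓ N ≤ M) := by
    ext z; rfl
  have hcu : (Submodule.inclusion (inf_le_left : M ⊓ N ≤ M)).rTensor ↥T c = u := by
    rw [← hfst, ← hc, ← LinearMap.rTensor_comp_apply, hcomp]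
  refine ⟨c, ?_⟩
  have hsub : M.subtype.comp (Submodule.inclusion (inf_le_left : M ⊓ N ≤ M))
      = (M ⊓ N).subtype := by
    ext z; rfl
  have hkey : psiT T (M ⊓ N) = (psiT T M).comp
      ((Submodule.inclusion (inf_le_left : M ⊓ N ≤ M)).rTensor ↥T) := by
    unfold psiT
    rw [LinearMap.comp_assoc, ← LinearMap.rTensor_comp, hsub]
  rw [hkey]
  show psiT T M ((Submodule.inclusion (inf_le_left : M ⊓ N ≤ M)).rTensor ↥T c) = x
  rw [hcu, hu]

lemma extS_inf [Module.Flat R ↥T] (M N : Submodule R K) :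
    extS T (M ⊓ N) = extS T M ⊓ extS T N := by
  apply le_antisymm
  · exact le_inf (extS_mono T inf_le_left) (extS_mono T inf_le_right)
  · intro x hx
    exact flat_inf T M N hx.1 hx.2

end Psi

set_option linter.unusedSectionVars false

section Generic

variable {A K : Type*} [CommRing A] [IsDomain A] [Field K] [Algebra A K] [IsFractionRing A K]

lemma ne_zero_of_mem_ne {I : FractionalIdeal (nonZeroDivisors A) K} {x : K}
    (hx : x ∈ I) (h0 : x ≠ 0) : I ≠ 0 := by
  rintro rfl
  exact h0 ((mem_zero_iff _).mp hx)

lemma exists_mem_ne_zero {I : FractionalIdeal (nonZeroDivisors A) K} (hI : I ≠ 0) :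
    ∃ x ∈ I, x ≠ 0 := by
  by_contra h
  push_neg at h
  apply hI
  apply coeToSubmodule_injective
  ext x
  simp only [coe_zero, Submodule.mem_bot, mem_coe]
  exact ⟨fun hx => h x hx, fun hx => hx ▸ Submodule.zero_mem _⟩

lemma le_iff_mem' {I J : FractionalIdeal (nonZeroDivisors A) K} :
    I ≤ J ↔ ∀ x ∈ I, x ∈ J := by
  rw [← coe_le_coe]
  exact ⟨fun h x hx => mem_coe.mp (h (mem_coe.mpr hx)),
    fun h x hx => mem_coe.mpr (h x (mem_coe.mp hx))⟩

lemma one_div_ne_zero' {I : FractionalIdeal (nonZeroDivisors A) K} (hI : I ≠ 0) :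
    (1 : FractionalIdeal (nonZeroDivisors A) K) / I ≠ 0 := by
  obtain ⟨a, haS, ha⟩ := I.isFractional
  have hmem : algebraMap A K a ∈ (1 : FractionalIdeal (nonZeroDivisors A) K) / I := by
    rw [mem_div_iff_of_ne_zero hI]
    intro y hy
    obtain ⟨r, hr⟩ := ha y hy
    rw [mem_one_iff]
    exact ⟨r, by rw [hr, Algebra.smul_def]⟩
  exact ne_zero_of_mem_ne hmem
    (IsFractionRing.to_map_ne_zero_of_mem_nonZeroDivisors haS)

lemma div_antitone' {I J : FractionalIdeal (nonZeroDivisors A) K}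
    (hI : I ≠ 0) (hJ : J ≠ 0) (h : I ≤ J) :
    (1 : FractionalIdeal (nonZeroDivisors A) K) / J ≤ 1 / I := by
  rw [le_iff_mem']
  intro x hx
  rw [mem_div_iff_of_ne_zero hI]
  intro y hy
  exact (mem_div_iff_of_ne_zero hJ).mp hx y (le_iff_mem'.mp h y hy)

lemma le_vclos' {I : FractionalIdeal (nonZeroDivisors A) K} (hI : I ≠ 0) :
    I ≤ 1 / (1 / I) :=
  (le_div_iff_mul_le (one_div_ne_zero' hI)).mpr mul_one_div_le_one

lemma vclos_mono' {I J : FractionalIdeal (nonZeroDivisors A) K}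
    (hI : I ≠ 0) (hJ : J ≠ 0) (h : I ≤ J) :
    (1 : FractionalIdeal (nonZeroDivisors A) K) / (1 / I) ≤ 1 / (1 / J) :=
  div_antitone' (one_div_ne_zero' hJ) (one_div_ne_zero' hI) (div_antitone' hI hJ h)

lemma tClos_eq_of_fg {G : FractionalIdeal (nonZeroDivisors A) K}
    (hG : G ≠ 0) (hfg : (G : Submodule A K).FG) :
    tClos A G = ((1 / (1 / G) : FractionalIdeal (nonZeroDivisors A) K) : Submodule A K) := by
  apply le_antisymm
  · apply iSup_le
    rintro ⟨F, hF0, hFfg, hFle⟩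
    exact coe_le_coe.mpr (vclos_mono' hF0 hG hFle)
  · exact le_iSup (fun F : {F : FractionalIdeal (nonZeroDivisors A) K //
      F ≠ 0 ∧ (F : Submodule A K).FG ∧ F ≤ G} =>
      ((1 / (1 / F.1) : FractionalIdeal (nonZeroDivisors A) K) : Submodule A K))
      ⟨G, hG, hfg, le_rfl⟩

lemma mem_tClos_iff {E : FractionalIdeal (nonZeroDivisors A) K} (hE : E ≠ 0) {x : K} :
    x ∈ tClos A E ↔ ∃ F : FractionalIdeal (nonZeroDivisors A) K,
      F ≠ 0 ∧ (F : Submodule A K).FG ∧ F ≤ E ∧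
        x ∈ (1 / (1 / F) : FractionalIdeal (nonZeroDivisors A) K) := by
  obtain ⟨y, hyE, hy0⟩ := exists_mem_ne_zero hE
  have hne : Nonempty {F : FractionalIdeal (nonZeroDivisors A) K //
      F ≠ 0 ∧ (F : Submodule A K).FG ∧ F ≤ E} := by
    refine ⟨⟨spanSingleton (nonZeroDivisors A) y, ?_, ?_, ?_⟩⟩
    · rwa [Ne, spanSingleton_eq_zero_iff]
    · rw [coe_spanSingleton]
      exact Submodule.fg_span_singleton y
    · rwa [spanSingleton_le_iff_mem]
  have hdir : Directed (· ≤ ·) (fun F : {F : FractionalIdeal (nonZeroDivisors A) K //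
      F ≠ 0 ∧ (F : Submodule A K).FG ∧ F ≤ E} =>
      ((1 / (1 / F.1) : FractionalIdeal (nonZeroDivisors A) K) : Submodule A K)) := by
    rintro ⟨F1, hF1, hfg1, hle1⟩ ⟨F2, hF2, hfg2, hle2⟩
    have hsup0 : F1 ⊔ F2 ≠ 0 := by
      intro h
      exact hF1 (le_antisymm (h ▸ le_sup_left) (zero_le _))
    have hsupfg : ((F1 ⊔ F2 : FractionalIdeal (nonZeroDivisors A) K) : Submodule A K).FG := by
      rw [coe_sup]
      exact hfg1.sup hfg2
    refine ⟨⟨F1 ⊔ F2, hsup0, hsupfg, sup_le hle1 hle2⟩, ?_, ?_⟩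
    · exact coe_le_coe.mpr (vclos_mono' hF1 hsup0 le_sup_left)
    · exact coe_le_coe.mpr (vclos_mono' hF2 hsup0 le_sup_right)
  rw [tClos, Submodule.mem_iSup_of_directed _ hdir]
  constructor
  · rintro ⟨⟨F, hF0, hFfg, hFle⟩, hx⟩
    exact ⟨F, hF0, hFfg, hFle, mem_coe.mp hx⟩
  · rintro ⟨F, hF0, hFfg, hFle, hx⟩
    exact ⟨⟨F, hF0, hFfg, hFle⟩, mem_coe.mpr hx⟩

lemma mem_tClos_of {E F : FractionalIdeal (nonZeroDivisors A) K}
    (hF0 : F ≠ 0) (hFfg : (F : Submodule A K).FG) (hFle : F ≤ E) {x : K}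
    (hx : x ∈ (1 / (1 / F) : FractionalIdeal (nonZeroDivisors A) K)) :
    x ∈ tClos A E := by
  have := le_iSup (fun F : {F : FractionalIdeal (nonZeroDivisors A) K //
      F ≠ 0 ∧ (F : Submodule A K).FG ∧ F ≤ E} =>
      ((1 / (1 / F.1) : FractionalIdeal (nonZeroDivisors A) K) : Submodule A K))
      ⟨F, hF0, hFfg, hFle⟩
  exact this (mem_coe.mpr hx)

lemma smul_vclos {F : FractionalIdeal (nonZeroDivisors A) K} (hF0 : F ≠ 0)
    {c : K} (hc : c ≠ 0) {w : K}
    (hw : w ∈ (1 / (1 / F) : FractionalIdeal (nonZeroDivisors A) K)) :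
    c * w ∈ (1 / (1 / (spanSingleton (nonZeroDivisors A) c * F)) :
      FractionalIdeal (nonZeroDivisors A) K) := by
  set F' := spanSingleton (nonZeroDivisors A) c * F with hF'
  obtain ⟨x0, hx0F, hx00⟩ := exists_mem_ne_zero hF0
  have hF'0 : F' ≠ 0 := by
    apply ne_zero_of_mem_ne (x := c * x0)
    · exact mul_mem_mul (mem_spanSingleton_self _ c) hx0F
    · exact mul_ne_zero hc hx00
  rw [mem_div_iff_of_ne_zero (one_div_ne_zero' hF'0)]
  intro u hu
  have huc : u * c ∈ (1 : FractionalIdeal (nonZeroDivisors A) K) / F := by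
    rw [mem_div_iff_of_ne_zero hF0]
    intro z hz
    have : u * (c * z) ∈ (1 : FractionalIdeal (nonZeroDivisors A) K) :=
      (mem_div_iff_of_ne_zero hF'0).mp hu (c * z)
        (mul_mem_mul (mem_spanSingleton_self _ c) hz)
    rw [show u * c * z = u * (c * z) by ring]
    exact this
  have := (mem_div_iff_of_ne_zero (one_div_ne_zero' hF0)).mp hw (u * c) huc
  rw [show c * w * u = w * (u * c) by ring]
  exact this

end Generic

section Specific

variable {R K : Type*} [CommRing R] [IsDomain R] [Field K] [Algebra R K] [IsFractionRing R K]
  (T : Subalgebra R K) [IsDomain ↥T] [IsFractionRing ↥T K]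

lemma coe_one_div_eq_colonS {A : Type*} [CommRing A] [IsDomain A] [Algebra A K]
    [IsFractionRing A K] {I : FractionalIdeal (nonZeroDivisors A) K} (hI : I ≠ 0) :
    ((1 / I : FractionalIdeal (nonZeroDivisors A) K) : Submodule A K)
      = colonS A ((1 : FractionalIdeal (nonZeroDivisors A) K) : Submodule A K)
          ((I : Submodule A K) : Set K) := by
  ext x
  rw [mem_coe, mem_div_iff_of_ne_zero hI]
  exact ⟨fun h y hy => mem_coe.mpr (h y (mem_coe.mp hy)),
    fun h y hy => mem_coe.mp (h y (mem_coe.mpr hy))⟩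

lemma colonS_extS_singleton (E : Submodule R K) (a : K) :
    colonS ↥T (extS T E) {a} = extS T (colonS R E {a}) := by
  by_cases ha : a = 0
  · subst ha
    rw [colonS_singleton_zero, colonS_singleton_zero, extS_top]
  · apply le_antisymm
    · intro x hx
      have hxa : x * a ∈ extS T E := hx a rfl
      have hkey : ∀ z ∈ extS T E, z * a⁻¹ ∈ extS T (colonS R E {a}) := by
        intro z hz
        induction hz using Submodule.span_induction with
        | mem e he =>
          apply subset_extS
          show e * a⁻¹ ∈ colonS R E {a}
          intro y hy
          rw [Set.mem_singleton_iff] at hy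
          subst hy
          rw [mul_assoc, inv_mul_cancel₀ ha, mul_one]
          exact he
        | zero => rw [zero_mul]; exact Submodule.zero_mem _
        | add u v _ _ hu hv => rw [add_mul]; exact Submodule.add_mem _ hu hv
        | smul t z _ hz2 => rw [smul_mul_assoc]; exact Submodule.smul_mem _ t hz2
      have hx2 := hkey _ hxa
      rwa [mul_assoc, mul_inv_cancel₀ ha, mul_one] at hx2
    · rw [extS_le_iff]
      intro e he
      rw [SetLike.mem_coe] at he
      intro y hy
      rw [Set.mem_singleton_iff] at hy
      subst hy
      exact subset_extS T E (he y rfl)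

lemma colonS_span_R (E' : Submodule ↥T K) (s : Set K) :
    colonS ↥T E' ((Submodule.span R s : Submodule R K) : Set K) = colonS ↥T E' s := by
  apply colonS_span (A' := R)
  · intro a x y; exact mul_smul_comm a x y
  · intro a z hz
    rw [← algebraMap_smul (↥T) a z]
    exact E'.smul_mem _ hz

lemma colonS_span_T (E' : Submodule ↥T K) (s : Set K) :
    colonS ↥T E' ((Submodule.span ↥T s : Submodule ↥T K) : Set K) = colonS ↥T E' s := by
  apply colonS_span (A' := ↥T)
  · intro a x y; exact mul_smul_comm a x y
  · intro a z hz; exact E'.smul_mem _ hz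

lemma colonS_span_selfR (E : Submodule R K) (s : Set K) :
    colonS R E ((Submodule.span R s : Submodule R K) : Set K) = colonS R E s := by
  apply colonS_span (A' := R)
  · intro a x y; exact mul_smul_comm a x y
  · intro a z hz; exact E.smul_mem _ hz

lemma colonS_extS_finset [Module.Flat R ↥T] (E : Submodule R K) (s : Finset K) :
    colonS ↥T (extS T E) (↑s : Set K) = extS T (colonS R E (↑s : Set K)) := by
  classical
  induction s using Finset.induction_on with
  | empty =>
    rw [Finset.coe_empty, colonS_empty, colonS_empty, extS_top]
  | insert _ _ ha ih =>
    rw [Finset.coe_insert, colonS_insert, colonS_insert, ih,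
      colonS_extS_singleton, ← extS_inf]

/-- The extension of a fractional `R`-ideal to a fractional `T`-ideal. -/
noncomputable def extFI (I : FractionalIdeal (nonZeroDivisors R) K) :
    FractionalIdeal (nonZeroDivisors ↥T) K := by
  refine ⟨extS T (I : Submodule R K), ?_⟩
  obtain ⟨a, haS, ha⟩ := I.isFractional
  have haK : (algebraMap R K) a ≠ 0 :=
    IsFractionRing.to_map_ne_zero_of_mem_nonZeroDivisors haS
  refine ⟨algebraMap R ↥T a, ?_, ?_⟩
  · apply mem_nonZeroDivisors_of_ne_zero
    intro h
    apply haK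
    have : ((algebraMap R ↥T a : ↥T) : K) = algebraMap R K a := rfl
    rw [← this, h]; rfl
  · intro b hb
    have hsmul : ∀ b : K, (algebraMap R ↥T a) • b = (algebraMap R K a) * b :=
      fun b => rfl
    induction hb using Submodule.span_induction with
    | mem z hz =>
      obtain ⟨r, hr⟩ := ha z (mem_coe.mp hz)
      refine ⟨⟨algebraMap R K r, T.algebraMap_mem r⟩, ?_⟩
      show (algebraMap R K r : K) = _
      rw [hsmul z, hr, Algebra.smul_def]
    | zero => exact ⟨0, by simp⟩
    | add u v _ _ hu hv =>
      obtain ⟨tu, htu⟩ := hu; obtain ⟨tv, htv⟩ := hv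
      refine ⟨tu + tv, ?_⟩
      rw [smul_add, _root_.map_add, htu, htv]
    | smul t z _ hz =>
      obtain ⟨tz, htz⟩ := hz
      refine ⟨t * tz, ?_⟩
      rw [_root_.map_mul, htz, hsmul z, hsmul (t • z)]
      show (t : K) * ((algebraMap R K a) * z) = (algebraMap R K a) * ((t : K) * z)
      ring

lemma coe_extFI (I : FractionalIdeal (nonZeroDivisors R) K) :
    (extFI T I : Submodule ↥T K) = extS T (I : Submodule R K) := rfl

lemma extFI_ne_zero {I : FractionalIdeal (nonZeroDivisors R) K} (hI : I ≠ 0) :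
    extFI T I ≠ 0 := by
  obtain ⟨x, hxI, hx0⟩ := exists_mem_ne_zero hI
  apply ne_zero_of_mem_ne (x := x) _ hx0
  show x ∈ (extFI T I : Submodule ↥T K)
  exact subset_extS T _ (mem_coe.mpr hxI)

lemma extFI_fg {I : FractionalIdeal (nonZeroDivisors R) K}
    (hfg : (I : Submodule R K).FG) : ((extFI T I : FractionalIdeal (nonZeroDivisors ↥T) K) :
      Submodule ↥T K).FG := by
  obtain ⟨s, hs⟩ := hfg
  refine ⟨s, ?_⟩
  rw [coe_extFI, extS, ← hs, Submodule.span_span_of_tower]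

lemma extS_one :
    extS T ((1 : FractionalIdeal (nonZeroDivisors R) K) : Submodule R K)
      = ((1 : FractionalIdeal (nonZeroDivisors ↥T) K) : Submodule ↥T K) := by
  apply le_antisymm
  · rw [extS_le_iff]
    intro x hx
    obtain ⟨r, hr⟩ := (mem_one_iff _).mp (mem_coe.mp hx)
    rw [SetLike.mem_coe, mem_coe, mem_one_iff _]
    exact ⟨⟨algebraMap R K r, T.algebraMap_mem r⟩, hr⟩
  · intro x hx
    obtain ⟨t, ht⟩ := (mem_one_iff _).mp (mem_coe.mp hx)
    have h1 : (1 : K) ∈ ((1 : FractionalIdeal (nonZeroDivisors R) K) : Submodule R K) := by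
      rw [mem_coe, mem_one_iff _]
      exact ⟨1, by simp⟩
    have := Submodule.smul_mem (extS T ((1 : FractionalIdeal (nonZeroDivisors R) K) :
      Submodule R K)) t (subset_extS T _ h1)
    rwa [Algebra.smul_def, mul_one, ht] at this

/-- Key step 1: `(I·T)⁻¹ = I⁻¹·T` for finitely generated `I`. -/
lemma coe_one_div_extFI [Module.Flat R ↥T] {I : FractionalIdeal (nonZeroDivisors R) K}
    (hI : I ≠ 0) (hfg : (I : Submodule R K).FG) :
    ((1 / extFI T I : FractionalIdeal (nonZeroDivisors ↥T) K) : Submodule ↥T K)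
      = extS T ((1 / I : FractionalIdeal (nonZeroDivisors R) K) : Submodule R K) := by
  obtain ⟨s, hs⟩ := hfg
  rw [coe_one_div_eq_colonS (extFI_ne_zero T hI), coe_extFI, extS, colonS_span_T,
    ← extS_one T]
  have h1 : colonS (↥T) (extS T ((1 : FractionalIdeal (nonZeroDivisors R) K) : Submodule R K))
      ((I : Submodule R K) : Set K)
      = colonS (↥T) (extS T ((1 : FractionalIdeal (nonZeroDivisors R) K) : Submodule R K))
        ((s : Finset K) : Set K) := by
    rw [← hs, colonS_span_R]
  rw [h1, colonS_extS_finset, coe_one_div_eq_colonS hI]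
  congr 1
  rw [← hs, colonS_span_selfR]

/-- Key step 2: the v-closure of `I·T` over `T` is `I^{v_R}·T`. -/
lemma coe_vclos_extFI [Module.Flat R ↥T] {I : FractionalIdeal (nonZeroDivisors R) K}
    (hI : I ≠ 0) (hfg : (I : Submodule R K).FG)
    (hF : ∃ F : FractionalIdeal (nonZeroDivisors R) K, F ≤ I * (1 / I) ∧
      (F : Submodule R K).FG ∧ F ≠ 0 ∧ (1 / (1 / F) : FractionalIdeal _ K) = 1) :
    ((1 / (1 / extFI T I) : FractionalIdeal (nonZeroDivisors ↥T) K) : Submodule ↥T K)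
      = extS T ((1 / (1 / I) : FractionalIdeal (nonZeroDivisors R) K) : Submodule R K) := by
  have hE0 := extFI_ne_zero T hI
  have h1 : ((1 / (1 / extFI T I) : FractionalIdeal (nonZeroDivisors ↥T) K) : Submodule ↥T K)
      = colonS ↥T ((1 : FractionalIdeal (nonZeroDivisors ↥T) K) : Submodule ↥T K)
          (((1 / I : FractionalIdeal (nonZeroDivisors R) K) : Submodule R K) : Set K) := by
    rw [coe_one_div_eq_colonS (one_div_ne_zero' hE0), coe_one_div_extFI T hI hfg, extS,
      colonS_span_T]
  rw [h1]
  obtain ⟨F, hFle, hFfg, hF0, hFv⟩ := hF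
  have hFle1 : F ≤ (1 : FractionalIdeal (nonZeroDivisors R) K) :=
    le_trans hFle mul_one_div_le_one
  have h1F : (1 / F : FractionalIdeal (nonZeroDivisors R) K) = 1 := by
    apply le_antisymm
    · have h := le_vclos' (one_div_ne_zero' hF0)
      rw [hFv, FractionalIdeal.div_one] at h
      exact h
    · rw [le_div_iff_mul_le hF0, one_mul]
      exact hFle1
  apply le_antisymm
  · intro x hx
    have hclaim : x ∈ colonS ↥T (extS T (I : Submodule R K))
        (((F : Submodule R K) : Set K)) := by
      intro z hz
      have hzF : z ∈ (I * (1 / I) : FractionalIdeal (nonZeroDivisors R) K) :=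
        le_iff_mem'.mp hFle z (mem_coe.mp hz)
      have hzsub : z ∈ ((I : Submodule R K) *
          ((1 / I : FractionalIdeal (nonZeroDivisors R) K) : Submodule R K)) := by
        rw [← coe_mul]; exact mem_coe.mpr hzF
      refine Submodule.mul_induction_on hzsub ?_ ?_
      · intro a ha b hb
        have hxb : x * b ∈ ((1 : FractionalIdeal (nonZeroDivisors ↥T) K) : Submodule ↥T K) :=
          hx b hb
        obtain ⟨t, ht⟩ := (mem_one_iff _).mp (mem_coe.mp hxb)
        have heq : x * (a * b) = t • a := by
          rw [Algebra.smul_def]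
          show _ = algebraMap ↥T K t * a
          rw [ht]; ring
        rw [heq]
        exact Submodule.smul_mem _ t (subset_extS T _ ha)
      · intro u v hu hv
        rw [mul_add]; exact Submodule.add_mem _ hu hv
    obtain ⟨sF, hsF⟩ := hFfg
    have h2 : colonS ↥T (extS T (I : Submodule R K)) (((F : Submodule R K) : Set K))
        = extS T (colonS R (I : Submodule R K) (((F : Submodule R K) : Set K))) := by
      rw [← hsF, colonS_span_R, colonS_extS_finset, colonS_span_selfR]
    rw [h2] at hclaim
    have h3 : colonS R (I : Submodule R K) (((F : Submodule R K) : Set K))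
        ≤ ((1 / (1 / I) : FractionalIdeal (nonZeroDivisors R) K) : Submodule R K) := by
      intro y hy
      rw [mem_coe, mem_div_iff_of_ne_zero (one_div_ne_zero' hI)]
      intro w hw
      have hywF : y * w ∈ (1 / F : FractionalIdeal (nonZeroDivisors R) K) := by
        rw [mem_div_iff_of_ne_zero hF0]
        intro z hz
        have hyz : y * z ∈ (I : Submodule R K) := hy z hz
        have h4 := (mem_div_iff_of_ne_zero hI).mp hw (y * z) (mem_coe.mp hyz)
        rw [show y * w * z = w * (y * z) by ring]
        exact h4
      rw [h1F] at hywF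
      exact mem_coe.mpr hywF
    exact extS_mono T h3 hclaim
  · rw [extS_le_iff]
    intro x hx
    rw [SetLike.mem_coe, mem_coe] at hx
    intro y hy
    have h5 := (mem_div_iff_of_ne_zero (one_div_ne_zero' hI)).mp hx y (mem_coe.mp hy)
    obtain ⟨r, hr⟩ := (mem_one_iff _).mp h5
    rw [mem_coe, mem_one_iff _]
    exact ⟨⟨algebraMap R K r, T.algebraMap_mem r⟩, hr⟩

end Specific

end

/-- Let `R` be a PvMD and `T` a flat overring of `R` (inside `K = Frac R = Frac T`) with
nonzero conductor `(R : T)`. Then for every nonzero finitely generated ideal `I` of `R`,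
`(IT)^{t_T} = I^{v_R}·T`; consequently the extension of `t_R` to `T` coincides with
`t_T`: the `t_T`-closure of any nonzero fractional ideal of `T` agrees with its
`t_R`-closure. -/
theorem pvmd_flat_overring_t_extension
    {R K : Type*} [CommRing R] [IsDomain R] [Field K] [Algebra R K] [IsFractionRing R K]
    (T : Subalgebra R K) [IsDomain ↥T] [IsFractionRing ↥T K] [Module.Flat R ↥T]
    (hcond : ∃ x : K, x ≠ 0 ∧ ∀ t : ↥T, ∃ r : R, x * (t : K) = algebraMap R K r)
    (hPvMD : ∀ I : FractionalIdeal (nonZeroDivisors R) K, I ≠ 0 →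
      (I : Submodule R K).FG →
      ∃ F : FractionalIdeal (nonZeroDivisors R) K, F ≤ I * (1 / I) ∧
        (F : Submodule R K).FG ∧ F ≠ 0 ∧ (1 / (1 / F) : FractionalIdeal _ K) = 1) :
    (∀ I : FractionalIdeal (nonZeroDivisors R) K, I ≠ 0 → (I : Submodule R K).FG →
      I ≤ 1 →
      ∀ G : FractionalIdeal (nonZeroDivisors ↥T) K,
        (G : Submodule ↥T K) = Submodule.span ↥T ((I : Submodule R K) : Set K) →
        tClos ↥T G = Submodule.span ↥T
          (((1 / (1 / I) : FractionalIdeal (nonZeroDivisors R) K) : Submodule R K) : Set K)) ∧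
    (∀ E_T : FractionalIdeal (nonZeroDivisors ↥T) K, E_T ≠ 0 →
      ∀ E_R : FractionalIdeal (nonZeroDivisors R) K,
        ((E_R : Submodule R K) : Set K) = ((E_T : Submodule ↥T K) : Set K) →
        ((tClos ↥T E_T : Submodule ↥T K) : Set K) = ((tClos R E_R : Submodule R K) : Set K)) := by
  constructor
  · intro I hI hfg _hle1 G hG
    have hGE : G = extFI T I := by
      apply coeToSubmodule_injective
      show (G : Submodule ↥T K) = (extFI T I : Submodule ↥T K)
      rw [hG, coe_extFI]
      rfl
    rw [hGE, tClos_eq_of_fg (extFI_ne_zero T hI) (extFI_fg T hfg),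
      coe_vclos_extFI T hI hfg (hPvMD I hI hfg)]
    rfl
  · intro E_T hET E_R hset
    have hER : E_R ≠ 0 := by
      obtain ⟨y, hyT, hy0⟩ := exists_mem_ne_zero hET
      apply ne_zero_of_mem_ne (x := y) _ hy0
      have h0 : y ∈ ((E_T : Submodule ↥T K) : Set K) := hyT
      rw [← hset] at h0
      exact mem_coe.mp h0
    have hstable : ∀ (t : ↥T) (z : K), z ∈ tClos R E_R → (t : K) * z ∈ tClos R E_R := by
      intro t z hz
      by_cases ht : (t : K) = 0
      · rw [ht, zero_mul]; exact Submodule.zero_mem _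
      · rw [mem_tClos_iff hER] at hz
        obtain ⟨F2, hF20, hF2fg, hF2le, hzF2⟩ := hz
        have hsv := smul_vclos hF20 ht hzF2
        set F' := spanSingleton (nonZeroDivisors R) ((t : K)) * F2 with hF'
        have hF'0 : F' ≠ 0 := by
          obtain ⟨x0, hx0F, hx00⟩ := exists_mem_ne_zero hF20
          exact ne_zero_of_mem_ne (mul_mem_mul (mem_spanSingleton_self _ _) hx0F)
            (mul_ne_zero ht hx00)
        have hF'fg : (F' : Submodule R K).FG := by
          rw [hF', coe_mul, coe_spanSingleton]
          exact (Submodule.fg_span_singleton _).mul hF2fg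
        have hF'le : F' ≤ E_R := by
          rw [← coe_le_coe, hF', coe_mul, coe_spanSingleton]
          apply Submodule.mul_le.mpr
          intro m hm n hn
          obtain ⟨r, rfl⟩ := Submodule.mem_span_singleton.mp hm
          have hn' : (t : K) * n ∈ (E_R : Submodule R K) := by
            have h6 : n ∈ ((E_T : Submodule ↥T K) : Set K) := by
              rw [← hset]; exact coe_le_coe.mpr hF2le hn
            have h7 : t • n ∈ (E_T : Submodule ↥T K) := Submodule.smul_mem _ t h6
            have h8 : (t : K) * n ∈ ((E_T : Submodule ↥T K) : Set K) := h7
            rw [← hset] at h8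
            exact h8
          rw [smul_mul_assoc]
          exact Submodule.smul_mem _ r hn'
        exact mem_tClos_of hF'0 hF'fg hF'le hsv
    apply Set.Subset.antisymm
    · intro x hx
      rw [SetLike.mem_coe, mem_tClos_iff hET] at hx
      obtain ⟨G, hG0, hGfg, hGle, hxG⟩ := hx
      obtain ⟨s, hs⟩ := hGfg
      have hsubET : (↑s : Set K) ⊆ ((E_T : Submodule ↥T K) : Set K) := by
        intro z hz
        have h1 : z ∈ (G : Submodule ↥T K) := by
          rw [← hs]; exact Submodule.subset_span hz
        exact coe_le_coe.mpr hGle h1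
      have hsubER : (↑s : Set K) ⊆ ((E_R : Submodule R K) : Set K) := by
        rw [hset]; exact hsubET
      set FR : FractionalIdeal (nonZeroDivisors R) K :=
        ⟨Submodule.span R (↑s : Set K),
          isFractional_of_le (J := E_R) (Submodule.span_le.mpr hsubER)⟩ with hFRdef
      have hcoeFR : (FR : Submodule R K) = Submodule.span R (↑s : Set K) := rfl
      have hFRfg : (FR : Submodule R K).FG := ⟨s, rfl⟩
      have hGFR : extFI T FR = G := by
        apply coeToSubmodule_injective
        show (extFI T FR : Submodule ↥T K) = (G : Submodule ↥T K)
        rw [coe_extFI, hcoeFR, extS, Submodule.span_span_of_tower, hs]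
      have hFR0 : FR ≠ 0 := by
        intro h0
        apply hG0
        apply coeToSubmodule_injective
        show (G : Submodule ↥T K) = ((0 : FractionalIdeal (nonZeroDivisors ↥T) K) :
          Submodule ↥T K)
        have h1 : (FR : Submodule R K) = ⊥ := by rw [h0]; exact coe_zero
        rw [hcoeFR] at h1
        have h2 : ∀ z ∈ (↑s : Set K), z = (0 : K) := by
          intro z hz
          have h3 := Submodule.subset_span (R := R) hz
          rw [h1] at h3
          simpa using h3
        rw [coe_zero, ← hs, Submodule.span_eq_bot]
        exact h2
      have hFRle : FR ≤ E_R := by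
        rw [← coe_le_coe, hcoeFR]
        exact Submodule.span_le.mpr hsubER
      have hx2 : x ∈ extS T
          ((1 / (1 / FR) : FractionalIdeal (nonZeroDivisors R) K) : Submodule R K) := by
        rw [← coe_vclos_extFI T hFR0 hFRfg (hPvMD FR hFR0 hFRfg), hGFR]
        exact mem_coe.mpr hxG
      rw [SetLike.mem_coe]
      clear hxG
      induction hx2 using Submodule.span_induction with
      | mem z hz => exact mem_tClos_of hFR0 hFRfg hFRle (mem_coe.mp hz)
      | zero => exact Submodule.zero_mem _
      | add u v _ _ hu hv => exact Submodule.add_mem _ hu hv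
      | smul t z _ hz => exact hstable t z hz
    · intro x hx
      rw [SetLike.mem_coe, mem_tClos_iff hER] at hx
      obtain ⟨F, hF0, hFfg, hFle, hxF⟩ := hx
      rw [SetLike.mem_coe]
      refine mem_tClos_of (extFI_ne_zero T hF0) (extFI_fg T hFfg) ?_ ?_
      · rw [← coe_le_coe, coe_extFI, extS_le_iff]
        intro z hz
        have h1 : z ∈ ((E_R : Submodule R K) : Set K) := coe_le_coe.mpr hFle hz
        rw [hset] at h1
        exact h1
      · apply mem_coe.mp
        rw [coe_vclos_extFI T hF0 hFfg (hPvMD F hF0 hFfg)]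
        exact subset_extS T _ (mem_coe.mpr hxF)
end

section
/- Consider a pullback diagram of type (□⁺) with T quasilocal (so T = R_M). Then every (t_R)_T-invertible (t_R)_T-ideal of T is principal; i.e., Cl^{(t_R)_T}(T) = 0. -/
open FractionalIdeal

/-! Since `T` is quasilocal, `J` is principal as soon as it is invertible, i.e. `J·J⁻¹ = T`.
Otherwise `J·J⁻¹` is an ideal of `T` inside `M ⊆ R`, so every `t ∈ T` maps `F ⊆ J·J⁻¹` into `R`,
i.e. `T ⊆ F⁻¹`. But `1 ∈ F^v` forces `F⁻¹ ⊆ R`, hence `T = R`, contradicting `D ≠ k`. -/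

open IsLocalRing nonZeroDivisors

theorem FractionalIdeal.one_div_le_one_of_one_mem_one_div_one_div
    {R K : Type*} [CommRing R] [IsDomain R] [Field K] [Algebra R K] [IsFractionRing R K]
    {F : FractionalIdeal R⁰ K} (h : (1 : K) ∈ 1 / (1 / F)) : 1 / F ≤ 1 :=
  calc 1 / F = 1 / F * 1 := (mul_one _).symm
    _ ≤ 1 / F * (1 / (1 / F)) := mul_le_mul_right (one_le.mpr h) _
    _ ≤ 1 := mul_one_div_le_one

section Subring

variable {T K : Type*} [CommRing T] [IsDomain T] [Field K] [Algebra T K] {R : Subring T}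
  [IsFractionRing R K]

theorem Subring.algebraMap_mem_one_div_s19 {I : Ideal T} (hIR : (I : Set T) ⊆ R)
    {F : FractionalIdeal R⁰ K} (hF : F ≠ 0)
    (hFI : ((F : Submodule R K) : Set K) ⊆ ((I : FractionalIdeal T⁰ K) : Submodule T K))
    (t : T) : algebraMap T K t ∈ 1 / F := by
  rw [mem_div_iff_of_ne_zero hF]
  intro y hy
  obtain ⟨m, hm, rfl⟩ := (mem_coeIdeal _).mp (hFI hy)
  refine (mem_one_iff _).mpr ⟨⟨t * m, hIR (I.mul_mem_left t hm)⟩, ?_⟩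
  rw [IsScalarTower.algebraMap_apply R T K, ← map_mul]
  rfl

theorem Subring.eq_top_of_one_mem_one_div_one_div [IsFractionRing T K] {I : Ideal T}
    (hIR : (I : Set T) ⊆ R) {F : FractionalIdeal R⁰ K}
    (hFI : ((F : Submodule R K) : Set K) ⊆ ((I : FractionalIdeal T⁰ K) : Submodule T K))
    (h1 : (1 : K) ∈ 1 / (1 / F)) : R = ⊤ := by
  have hF : F ≠ 0 := by
    rintro rfl
    simp at h1
  refine (Subring.eq_top_iff' R).mpr fun t ↦ ?_
  obtain ⟨r, hr⟩ := (mem_one_iff _).mp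
    (one_div_le_one_of_one_mem_one_div_one_div h1 (algebraMap_mem_one_div_s19 hIR hF hFI t))
  rw [IsScalarTower.algebraMap_apply R T K] at hr
  exact IsFractionRing.injective T K hr ▸ r.2

theorem FractionalIdeal.mul_one_div_eq_one_of_maximalIdeal_subset [IsFractionRing T K]
    [IsLocalRing T] (hMR : (maximalIdeal T : Set T) ⊆ R) (hR : R ≠ ⊤)
    {J : FractionalIdeal T⁰ K} {F : FractionalIdeal R⁰ K}
    (hFJ : ((F : Submodule R K) : Set K) ⊆
      ((J * (1 / J) : FractionalIdeal T⁰ K) : Submodule T K))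
    (h1 : (1 : K) ∈ 1 / (1 / F)) : J * (1 / J) = 1 := by
  obtain ⟨I, hI⟩ := le_one_iff_exists_coeIdeal.mp (mul_one_div_le_one (I := J))
  rw [← hI] at hFJ ⊢
  by_cases hItop : I = ⊤
  · rw [hItop, coeIdeal_top]
  · exact absurd (Subring.eq_top_of_one_mem_one_div_one_div
      ((SetLike.coe_subset_coe.mpr (le_maximalIdeal hItop)).trans hMR) hFJ h1) hR

end Subring

theorem FractionalIdeal.isPrincipal_of_mul_eq_one
    {T K : Type*} [CommRing T] [IsLocalRing T] [Field K] [Algebra T K] [IsFractionRing T K]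
    {J J' : FractionalIdeal T⁰ K} (h : J * J' = 1) : (J : Submodule T K).IsPrincipal :=
  isPrincipal.of_finite_maximals_of_inv le_rfl
    (Set.subsingleton_of_forall_eq (maximalIdeal T) fun _ hI ↦ eq_maximalIdeal hI).finite J J' h

theorem tRT_invertible_ideal_principal_of_local_general
    {T K : Type*} [CommRing T] [IsDomain T] [IsLocalRing T]
    [Field K] [Algebra T K] [IsFractionRing T K]
    (M : Ideal T) [M.IsMaximal]
    (D : Subring (T ⧸ M)) (hD : D ≠ ⊤)
    (R : Subring T) (hR : R = D.comap (Ideal.Quotient.mk M))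
    [IsFractionRing ↥R K]
    (J : FractionalIdeal (nonZeroDivisors T) K) (hJ : J ≠ 0)
    (hinv : ∃ F : FractionalIdeal (nonZeroDivisors ↥R) K, F ≠ 0 ∧
      (F : Submodule ↥R K).FG ∧
      ((F : Submodule ↥R K) : Set K) ⊆
        (((J * (1 / J) : FractionalIdeal (nonZeroDivisors T) K) : Submodule T K) : Set K) ∧
      (1 : K) ∈ ((1 / (1 / F) : FractionalIdeal (nonZeroDivisors ↥R) K) : Submodule ↥R K)) :
    ∃ x : K, x ≠ 0 ∧ J = spanSingleton (nonZeroDivisors T) x := by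
  obtain ⟨F, -, -, hFJ, h1⟩ := hinv
  have hMR : (maximalIdeal T : Set T) ⊆ R := by
    rw [← eq_maximalIdeal ‹M.IsMaximal›, hR]
    intro m hm
    simp [Ideal.Quotient.eq_zero_iff_mem.mpr hm]
  have hRT : R ≠ ⊤ := by
    rintro rfl
    exact hD (by rw [← D.map_comap_eq_self_of_surjective Ideal.Quotient.mk_surjective, ← hR,
      ← RingHom.range_eq_map, RingHom.range_eq_top.mpr Ideal.Quotient.mk_surjective])
  have hJJ := mul_one_div_eq_one_of_maximalIdeal_subset hMR hRT hFJ h1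
  obtain ⟨x, rfl⟩ := (isPrincipal_iff J).mp (isPrincipal_of_mul_eq_one hJJ)
  exact ⟨x, fun hx ↦ hJ (by rw [hx, spanSingleton_zero]), rfl⟩

/-- In a pullback of type (□⁺) with `T` quasilocal (so `T = R_M`): every
`(t_R)_T`-invertible `(t_R)_T`-ideal `J` of `T` is principal, i.e.
`Cl^{(t_R)_T}(T) = 0`. Here `K` is the common quotient field; `J` being a
`(t_R)_T`-ideal means that `F^{v_R} ⊆ J` for every nonzero finitely generated
fractional ideal `F` of `R` contained in `J`, and `(t_R)_T`-invertibility of `J`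
means that `(J·J⁻¹)^{t_R} = T`, i.e. some nonzero finitely generated fractional ideal
`F` of `R` with `F ⊆ J·J⁻¹` satisfies `1 ∈ F^{v_R}`. -/
theorem tRT_invertible_ideal_principal_of_local
    {T K : Type*} [CommRing T] [IsDomain T] [IsLocalRing T]
    [Field K] [Algebra T K] [IsFractionRing T K]
    (M : Ideal T) [M.IsMaximal] (hM : M ≠ ⊥)
    (D : Subring (T ⧸ M)) (hD : D ≠ ⊤)
    (hQF : ∀ x : T ⧸ M, ∃ a b : ↥D, (b : T ⧸ M) ≠ 0 ∧ x * (b : T ⧸ M) = (a : T ⧸ M))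
    (R : Subring T) (hR : R = D.comap (Ideal.Quotient.mk M))
    [IsFractionRing ↥R K]
    (J : FractionalIdeal (nonZeroDivisors T) K) (hJ : J ≠ 0)
    (htIdeal : ∀ F : FractionalIdeal (nonZeroDivisors ↥R) K, F ≠ 0 →
      (F : Submodule ↥R K).FG →
      ((F : Submodule ↥R K) : Set K) ⊆ ((J : Submodule T K) : Set K) →
      (((1 / (1 / F) : FractionalIdeal (nonZeroDivisors ↥R) K) : Submodule ↥R K) : Set K)
        ⊆ ((J : Submodule T K) : Set K))
    (hinv : ∃ F : FractionalIdeal (nonZeroDivisors ↥R) K, F ≠ 0 ∧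
      (F : Submodule ↥R K).FG ∧
      ((F : Submodule ↥R K) : Set K) ⊆
        (((J * (1 / J) : FractionalIdeal (nonZeroDivisors T) K) : Submodule T K) : Set K) ∧
      (1 : K) ∈ ((1 / (1 / F) : FractionalIdeal (nonZeroDivisors ↥R) K) : Submodule ↥R K)) :
    ∃ x : K, x ≠ 0 ∧ J = spanSingleton (nonZeroDivisors T) x :=
  tRT_invertible_ideal_principal_of_local_general M D hD R hR J hJ hinv
end
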